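/- arXiv:1010.2050 — 9 statements merged into one kernel-verified Lean document; each statement's English description precedes it below -/
import Mathlib

section
/- For every C ∈ 𝒞(A), the canonical inclusion Σ(C) → Σ is a topological embedding: the subspace topology that the fiber Σ(C) = π⁻¹({C}) inherits from Σ coincides with the weak-* (Gelfand) topology of Σ(C). -/
open WeakDual WeakDual.CharacterSpace

variable (A : Type*) [NormedRing A] [StarRing A] [CStarRing A] [NormedAlgebra ℂ A]
  [StarModule ℂ A] [CompleteSpace A]

/-- `𝒞(A)`: the poset of commutative unital C*-subalgebras of `A`, i.e. closed, ⋆-closed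
commutative subalgebras containing the unit, ordered by inclusion. -/
abbrev CommCStarSubalg :=
  {C : StarSubalgebra ℂ A // IsClosed (C : Set A) ∧ ∀ x ∈ C, ∀ y ∈ C, x * y = y * x}

/-- `Σ = ∐_{C ∈ 𝒞(A)} Σ(C)`: the disjoint union of the Gelfand spectra (character spaces,
with the relative weak-* topology) of the commutative unital C*-subalgebras of `A`. -/
abbrev GelfandSpec := (C : CommCStarSubalg A) × characterSpace ℂ C.1

variable {A}

/-- `RestrictsTo h ψ φ` says that `ψ ∈ Σ(D)` restricts to `φ ∈ Σ(C)` along `C ⊆ D`,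
i.e. `ψ|_C = φ`. -/
def RestrictsTo {C D : CommCStarSubalg A} (h : C ≤ D) (ψ : characterSpace ℂ D.1)
    (φ : characterSpace ℂ C.1) : Prop :=
  ∀ a : C.1, ψ ⟨a.1, h a.2⟩ = φ a

variable (A)

/-- Conditions (1) and (2) on a subset `𝒰 ⊆ Σ`:
(1) each `𝒰_C = 𝒰 ∩ Σ(C)` is open in `Σ(C)`, and
(2) if `C ⊆ D`, `λ ∈ 𝒰_C` and `λ' ∈ Σ(D)` restricts to `λ`, then `λ' ∈ 𝒰_D`. -/
def IsGoodOpen (U : Set (GelfandSpec A)) : Prop :=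
  (∀ C : CommCStarSubalg A,
    IsOpen {φ : characterSpace ℂ C.1 | (⟨C, φ⟩ : GelfandSpec A) ∈ U}) ∧
  (∀ (C D : CommCStarSubalg A) (h : C ≤ D) (φ : characterSpace ℂ C.1)
    (ψ : characterSpace ℂ D.1), RestrictsTo h ψ φ →
      (⟨C, φ⟩ : GelfandSpec A) ∈ U → (⟨D, ψ⟩ : GelfandSpec A) ∈ U)

/-- The topology on `Σ` whose open sets are those satisfying conditions (1) and (2). -/
instance (priority := 2000) gelfandSpecTopology : TopologicalSpace (GelfandSpec A) where
  IsOpen := IsGoodOpen A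
  isOpen_univ := ⟨fun _ => isOpen_univ, fun _ _ _ _ _ _ _ => trivial⟩
  isOpen_inter := fun U V hU hV =>
    ⟨fun C => (hU.1 C).inter (hV.1 C),
     fun C D h φ ψ hr hm => ⟨hU.2 C D h φ ψ hr hm.1, hV.2 C D h φ ψ hr hm.2⟩⟩
  isOpen_sUnion := fun S hS =>
    ⟨fun C => by
      have : {φ : characterSpace ℂ C.1 | (⟨C, φ⟩ : GelfandSpec A) ∈ ⋃₀ S}
          = ⋃ U ∈ S, {φ : characterSpace ℂ C.1 | (⟨C, φ⟩ : GelfandSpec A) ∈ U} := by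
        ext φ; simp
      rw [this]
      exact isOpen_biUnion fun U hU => (hS U hU).1 C,
     fun C D h φ ψ hr hm => by
      obtain ⟨U, hU, hm⟩ := hm
      exact ⟨U, hU, (hS U hU).2 C D h φ ψ hr hm⟩⟩

/-- The Alexandrov topology on `𝒞(A)`: open sets are exactly the upward closed sets. -/
instance (priority := 2000) commCStarSubalgTopology :
    TopologicalSpace (CommCStarSubalg A) where
  IsOpen U := ∀ ⦃C D : CommCStarSubalg A⦄, C ≤ D → C ∈ U → D ∈ U
  isOpen_univ := fun _ _ _ _ => trivial
  isOpen_inter := fun U V hU hV C D h hm => ⟨hU h hm.1, hV h hm.2⟩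
  isOpen_sUnion := fun S hS C D h hm => by
    obtain ⟨U, hU, hm⟩ := hm
    exact ⟨U, hU, hS U hU h hm⟩

/-!
An open set `V ⊆ Σ(C)` is the trace on the fibre of the set of all `λ' ∈ Σ(D)`, `D ⊇ C`, with
`λ'|_C ∈ V`. That set is open in `Σ`: its part over `D` is open because restriction
`Σ(D) → Σ(C)` is weak-* continuous, and it satisfies condition (2) because restriction is
transitive. Conversely, condition (1) makes the inclusion of the fibre continuous.
-/

namespace WeakDual.CharacterSpace

variable {𝕜 S T : Type*} [Field 𝕜] [TopologicalSpace 𝕜] [IsTopologicalRing 𝕜]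
  [Ring S] [TopologicalSpace S] [Algebra 𝕜 S] [Ring T] [TopologicalSpace T] [Algebra 𝕜 T]

theorem comp_mem_characterSpace (ψ : characterSpace 𝕜 T) (f : S →A[𝕜] T) :
    (ψ : WeakDual 𝕜 T).comp f.toContinuousLinearMap ∈ characterSpace 𝕜 S := by
  rw [eq_set_map_one_map_mul]
  exact ⟨(congrArg ψ (map_one f)).trans (map_one ψ), fun x y =>
    (congrArg ψ (map_mul f x y)).trans (map_mul ψ _ _)⟩

noncomputable def comap (f : S →A[𝕜] T) : C(characterSpace 𝕜 T, characterSpace 𝕜 S) where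
  toFun ψ := ⟨_, comp_mem_characterSpace ψ f⟩
  continuous_toFun := (continuous_of_continuous_eval fun a =>
      (eval_continuous (f a)).comp continuous_subtype_val).subtype_mk _

end WeakDual.CharacterSpace

def StarSubalgebra.continuousInclusion {R B : Type*} [CommSemiring R] [StarRing R] [Semiring B]
    [StarRing B] [TopologicalSpace B] [Algebra R B] [StarModule R B] {S T : StarSubalgebra R B}
    (h : S ≤ T) : S →A[R] T :=
  ⟨(StarSubalgebra.inclusion h).toAlgHom, continuous_inclusion h⟩

namespace GelfandSpec

variable {B : Type*} [NormedRing B] [StarRing B] [NormedAlgebra ℂ B] [StarModule ℂ B]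

theorem _root_.RestrictsTo.comap_eq {C D : CommCStarSubalg B} {h : C ≤ D}
    {ψ : characterSpace ℂ D.1} {φ : characterSpace ℂ C.1} (hr : RestrictsTo h ψ φ) :
    comap (StarSubalgebra.continuousInclusion h) ψ = φ :=
  ext hr

theorem continuous_mk (C : CommCStarSubalg B) :
    Continuous fun φ : characterSpace ℂ C.1 => (⟨C, φ⟩ : GelfandSpec B) :=
  continuous_def.2 fun _ hU => hU.1 C

def restrictPreimage (C : CommCStarSubalg B) (V : Set (characterSpace ℂ C.1)) :
    Set (GelfandSpec B) :=
  {p | ∃ h : C ≤ p.1, comap (StarSubalgebra.continuousInclusion h) p.2 ∈ V}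

theorem isOpen_restrictPreimage {C : CommCStarSubalg B} {V : Set (characterSpace ℂ C.1)}
    (hV : IsOpen V) : IsOpen (restrictPreimage C V) := by
  refine ⟨fun D => ?_, fun D D' h' ψ ψ' hr ⟨h, hψ⟩ => ⟨h.trans h', ?_⟩⟩
  · have hfiber : {ψ : characterSpace ℂ D.1 | (⟨D, ψ⟩ : GelfandSpec B) ∈ restrictPreimage C V} =
        ⋃ h : C ≤ D, comap (StarSubalgebra.continuousInclusion h) ⁻¹' V := by
      ext
      rw [Set.mem_iUnion]
      rfl
    rw [hfiber]
    exact isOpen_iUnion fun h => hV.preimage (map_continuous _)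
  · -- restriction along `h.trans h'` is, definitionally, restriction along `h'` and then `h`
    rw [← hr.comap_eq] at hψ
    exact hψ

theorem mk_preimage_restrictPreimage (C : CommCStarSubalg B) (V : Set (characterSpace ℂ C.1)) :
    (fun φ : characterSpace ℂ C.1 => (⟨C, φ⟩ : GelfandSpec B)) ⁻¹' restrictPreimage C V = V :=
  Set.ext fun _ => ⟨fun ⟨_, hφ⟩ => hφ, fun hφ => ⟨le_rfl, hφ⟩⟩

end GelfandSpec

/-- For every `C ∈ 𝒞(A)`, the canonical inclusion `Σ(C) → Σ` is a topological embedding: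
the subspace topology the fiber `Σ(C) = π⁻¹{C}` inherits from `Σ` coincides with the
weak-* (Gelfand) topology of `Σ(C)`. -/
theorem isEmbedding_fiber_inclusion (C : CommCStarSubalg A) :
    Topology.IsEmbedding (fun φ : characterSpace ℂ C.1 => (⟨C, φ⟩ : GelfandSpec A)) := by
  refine ⟨⟨le_antisymm (GelfandSpec.continuous_mk C).le_induced fun V hV => ?_⟩,
    fun _ _ h => eq_of_heq (Sigma.mk.inj h).2⟩
  exact ⟨_, GelfandSpec.isOpen_restrictPreimage hV, GelfandSpec.mk_preimage_restrictPreimage C V⟩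
end

section
/- A cross-section σ : 𝒞(A) → Σ of π (i.e. a function with π ∘ σ = id, equivalently σ(C) ∈ Σ(C) for all C) is continuous if and only if σ(D)|_C = σ(C) for all C, D ∈ 𝒞(A) with C ⊆ D. -/
open WeakDual WeakDual.CharacterSpace

variable (A : Type*) [NormedRing A] [StarRing A] [CStarRing A] [NormedAlgebra ℂ A]
  [StarModule ℂ A] [CompleteSpace A]

variable {A}

variable (A)

/-- A cross-section `σ : 𝒞(A) → Σ` of `π` (given by a choice `σ C ∈ Σ(C)` for each `C`)
is continuous if and only if `σ(D)|_C = σ(C)` whenever `C ⊆ D`. -/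
theorem continuous_section_iff (σ : (C : CommCStarSubalg A) → characterSpace ℂ C.1) :
    Continuous (fun C : CommCStarSubalg A => (⟨C, σ C⟩ : GelfandSpec A)) ↔
      ∀ (C D : CommCStarSubalg A) (h : C ≤ D), RestrictsTo h (σ D) (σ C) := by
  constructor
  · intro hcont C D h a
    by_contra hne
    set ε := ‖σ D ⟨a.1, h a.2⟩ - σ C a‖ with hε
    have hεpos : 0 < ε := by
      rw [hε, norm_pos_iff, sub_ne_zero]
      exact hne
    set U : Set (GelfandSpec A) :=
      {p | ∃ hCE : C ≤ p.1, ‖p.2 ⟨a.1, hCE a.2⟩ - σ C a‖ < ε} with hUdef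
    have hUopen : IsOpen U := by
      constructor
      · intro E
        by_cases hCE : C ≤ E
        · have heq : {φ : characterSpace ℂ E.1 | (⟨E, φ⟩ : GelfandSpec A) ∈ U}
              = (fun φ : characterSpace ℂ E.1 => φ ⟨a.1, hCE a.2⟩) ⁻¹'
                  (Metric.ball (σ C a) ε) := by
            ext φ
            simp only [hUdef, Set.mem_setOf_eq, Set.mem_preimage, Metric.mem_ball,
              dist_eq_norm]
            exact ⟨fun ⟨_, hx⟩ => hx, fun hx => ⟨hCE, hx⟩⟩
          rw [heq]
          exact ((WeakDual.eval_continuous (⟨a.1, hCE a.2⟩ : E.1)).comp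
            continuous_subtype_val).isOpen_preimage _ Metric.isOpen_ball
        · have heq : {φ : characterSpace ℂ E.1 | (⟨E, φ⟩ : GelfandSpec A) ∈ U} = ∅ := by
            ext φ
            simp only [hUdef, Set.mem_setOf_eq, Set.mem_empty_iff_false, iff_false]
            rintro ⟨hc, -⟩
            exact hCE hc
          rw [heq]; exact isOpen_empty
      · rintro C' D' h' φ ψ hr ⟨hCC', hlt⟩
        refine ⟨hCC'.trans h', ?_⟩
        have := hr ⟨a.1, hCC' a.2⟩
        rw [show (⟨a.1, (hCC'.trans h') a.2⟩ : D'.1) = ⟨a.1, h' (hCC' a.2)⟩ from rfl,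
          this]
        exact hlt
    have hpre : IsOpen ((fun C : CommCStarSubalg A =>
        (⟨C, σ C⟩ : GelfandSpec A)) ⁻¹' U) := hcont.isOpen_preimage U hUopen
    have hCmem : C ∈ (fun C : CommCStarSubalg A =>
        (⟨C, σ C⟩ : GelfandSpec A)) ⁻¹' U := by
      refine ⟨le_refl C, ?_⟩
      simpa using hεpos
    have hDmem := hpre h hCmem
    obtain ⟨hCD, hlt⟩ := hDmem
    have : (⟨a.1, hCD a.2⟩ : D.1) = ⟨a.1, h a.2⟩ := rfl
    rw [this] at hlt
    exact lt_irrefl _ hlt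
  · intro hres
    rw [continuous_def]
    intro U hU
    intro C D h hmem
    exact hU.2 C D h (σ C) (σ D) (hres C D h) hmem
end

section
/- There is a bijective correspondence between valuations on A and continuous cross-sections σ : 𝒞(A) → Σ of π, under which a valuation λ and a continuous cross-section σ correspond to each other if and only if σ(C)(a) = λ(a) for every C ∈ 𝒞(A) and every self-adjoint a ∈ C. -/
open WeakDual WeakDual.CharacterSpace

variable (A : Type*) [NormedRing A] [StarRing A] [CStarRing A] [NormedAlgebra ℂ A]
  [StarModule ℂ A] [CompleteSpace A]

variable {A}

variable (A)

/-- A valuation on `A`: a nonzero map `A_sa → ℝ` that is dispersion-free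
(`λ(a²) = λ(a)²`) and linear on commuting operators. -/
structure IsValuation (l : selfAdjoint A → ℝ) : Prop where
  ne_zero : l ≠ 0
  dispersionFree : ∀ a b : selfAdjoint A, (b : A) = (a : A) * (a : A) → l b = l a ^ 2
  linear : ∀ (s t : ℝ) (a b c : selfAdjoint A), (a : A) * (b : A) = (b : A) * (a : A) →
    (c : A) = s • (a : A) + t • (b : A) → l c = s * l a + t * l b


open scoped ComplexStarModule
open Complex

variable {A}

namespace KSAux

lemma comm_of_mem (C : CommCStarSubalg A) {x y : A} (hx : x ∈ C.1) (hy : y ∈ C.1) :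
    x * y = y * x := C.2.2 x hx y hy

lemma rsmul_mem (C : StarSubalgebra ℂ A) {z : A} (hz : z ∈ C) (r : ℝ) : r • z ∈ C := by
  have h : r • z = (r : ℂ) • z := by
    rw [← smul_one_smul ℂ r z, Complex.real_smul, mul_one]
  rw [h]
  exact SMulMemClass.smul_mem _ hz

lemma realPart_mem (C : StarSubalgebra ℂ A) {x : A} (hx : x ∈ C) : (ℜ x : A) ∈ C := by
  rw [realPart_apply_coe]
  exact rsmul_mem C (add_mem hx (star_mem hx)) _

lemma imaginaryPart_mem (C : StarSubalgebra ℂ A) {x : A} (hx : x ∈ C) : (ℑ x : A) ∈ C := by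
  rw [imaginaryPart_apply_coe]
  exact SMulMemClass.smul_mem _ (rsmul_mem C (sub_mem hx (star_mem hx)) _)

lemma realPart_decomp (u v : selfAdjoint A) : ℜ ((u : A) + I • (v : A)) = u := by
  rw [map_add, realPart_I_smul, v.prop.imaginaryPart, neg_zero, add_zero]
  exact Subtype.ext u.prop.coe_realPart

lemma imaginaryPart_decomp (u v : selfAdjoint A) : ℑ ((u : A) + I • (v : A)) = v := by
  rw [map_add, imaginaryPart_I_smul, u.prop.imaginaryPart, zero_add]
  exact Subtype.ext v.prop.coe_realPart

end KSAux

set_option linter.unusedSectionVars false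

namespace KSAux

section Valuation

variable {l : selfAdjoint A → ℝ} (hl : IsValuation A l)

include hl

lemma val_zero : l 0 = 0 := by
  have h := hl.linear 1 1 0 0 0 (by simp) (by simp)
  have h0 : ((0 : selfAdjoint A) : A) = 0 := rfl
  linarith [h]

lemma val_smul (s : ℝ) (a : selfAdjoint A) : l (s • a) = s * l a := by
  have h := hl.linear s 0 a a (s • a) rfl (by
    push_cast
    rw [zero_smul, add_zero])
  rw [h, zero_mul, add_zero]

lemma val_add {a b : selfAdjoint A} (hab : (a : A) * b = (b : A) * a) :
    l (a + b) = l a + l b := by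
  have h := hl.linear 1 1 a b (a + b) hab (by push_cast; rw [one_smul, one_smul])
  rw [h, one_mul, one_mul]

variable (C : CommCStarSubalg A)

lemma val_mul {a b : selfAdjoint A} (ha : (a : A) ∈ C.1) (hb : (b : A) ∈ C.1)
    {w : selfAdjoint A} (hw : (w : A) = (a : A) * b) : l w = l a * l b := by
  have hwm : (w : A) ∈ C.1 := hw ▸ mul_mem ha hb
  have hba : (b : A) * a = (a : A) * b := comm_of_mem C hb ha
  have hu : IsSelfAdjoint ((a : A) * a) := by
    rw [IsSelfAdjoint, star_mul, a.prop.star_eq]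
  have hv : IsSelfAdjoint ((b : A) * b) := by
    rw [IsSelfAdjoint, star_mul, b.prop.star_eq]
  set u : selfAdjoint A := ⟨(a : A) * a, hu⟩ with hu'
  set v : selfAdjoint A := ⟨(b : A) * b, hv⟩ with hv'
  set p : selfAdjoint A := a + b with hp'
  have hq : IsSelfAdjoint ((p : A) * p) := by
    rw [IsSelfAdjoint, star_mul, p.prop.star_eq]
  set q : selfAdjoint A := ⟨(p : A) * p, hq⟩ with hq'
  set r : selfAdjoint A := v + (2 : ℝ) • w with hr'
  have h1 : l q = l p ^ 2 := hl.dispersionFree p q rfl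
  have h2 : l r = 1 * l v + 2 * l w := by
    refine hl.linear 1 2 v w r ?_ ?_
    · show (b : A) * b * w = (w : A) * ((b : A) * b)
      rw [hw]
      rw [show (b:A) * b * ((a:A) * b) = b * (b * a) * b by noncomm_ring,
        hba, show (b:A) * ((a:A)*b) * b = (a:A) * b * ((b:A)*b) by
          rw [show (b:A) * ((a:A)*b) = b * a * b by noncomm_ring, hba]; noncomm_ring]
    · rw [one_smul, hr']
      push_cast
      rfl
  have h3 : l q = 1 * l u + 1 * l r := by
    refine hl.linear 1 1 u r q ?_ ?_
    · show (a : A) * a * r = (r : A) * ((a : A) * a)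
      exact comm_of_mem C (mul_mem ha ha) (by
        show ((b : A) * b + (2:ℝ) • (w : A)) ∈ C.1
        exact add_mem (mul_mem hb hb) (rsmul_mem _ hwm 2))
    · show ((p : A) * p) = 1 • ((a:A) * a) + 1 • ((b:A)*b + (2:ℝ) • (w:A))
      rw [one_smul, one_smul, hw, two_smul]
      show ((a:A) + b) * ((a:A) + b) = _
      rw [add_mul, mul_add, mul_add, hba]
      abel
  have h4 : l p = l a + l b := val_add hl (comm_of_mem C ha hb)
  have h5 : l u = l a ^ 2 := hl.dispersionFree a u rfl
  have h6 : l v = l b ^ 2 := hl.dispersionFree b v rfl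
  rw [h4] at h1
  rw [h2, h5, h6] at h3
  rw [h1] at h3
  nlinarith [h3]

end Valuation

end KSAux

namespace KSAux

/-- The commutative C*-subalgebra generated by a self-adjoint element. -/
noncomputable def elemC (a : selfAdjoint A) : CommCStarSubalg A := by
  haveI : IsStarNormal (a : A) := a.prop.isStarNormal
  exact ⟨StarAlgebra.elemental ℂ (a : A), StarAlgebra.elemental.isClosed ℂ _,
    fun x hx y hy => congrArg Subtype.val
      (mul_comm (⟨x, hx⟩ : StarAlgebra.elemental ℂ (a : A)) ⟨y, hy⟩)⟩

lemma self_mem_elemC (a : selfAdjoint A) : (a : A) ∈ (elemC a).1 :=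
  StarAlgebra.elemental.self_mem ℂ (a : A)

lemma one_mem' (C : CommCStarSubalg A) : (1 : A) ∈ C.1 := one_mem C.1

lemma elemC_le {a : selfAdjoint A} {C : CommCStarSubalg A} (ha : (a : A) ∈ C.1) :
    elemC a ≤ C :=
  StarAlgebra.elemental.le_of_mem C.2.1 ha

section Valuation

variable {l : selfAdjoint A → ℝ} (hl : IsValuation A l)

include hl

lemma val_one : l 1 = 1 := by
  have h : l 1 = l 1 ^ 2 := hl.dispersionFree 1 1 (by simp)
  by_contra hne
  have h0 : l 1 = 0 := by
    rcases mul_eq_zero.mp (by nlinarith : l 1 * (l 1 - 1) = 0) with h' | h'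
    · exact h'
    · exact absurd (by linarith) hne
  refine hl.ne_zero (funext fun a => ?_)
  have h1m : ((1 : selfAdjoint A) : A) ∈ (elemC a).1 := by
    rw [selfAdjoint.val_one]; exact one_mem' _
  have hm := val_mul hl (elemC a) (b := 1) (self_mem_elemC a) h1m (w := a)
    (by rw [selfAdjoint.val_one, mul_one])
  rw [Pi.zero_apply, hm, h0, mul_zero]

end Valuation

end KSAux

namespace KSAux

/-- The candidate character attached to a valuation on a commutative subalgebra. -/
noncomputable def charFun (l : selfAdjoint A → ℝ) (C : CommCStarSubalg A) (x : C.1) : ℂ :=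
  (l (ℜ (x : A)) : ℂ) + (l (ℑ (x : A)) : ℂ) * I

section CharFun

variable {l : selfAdjoint A → ℝ} (hl : IsValuation A l) (C : CommCStarSubalg A)

lemma re_mem (x : C.1) : ((ℜ (x : A) : A)) ∈ C.1 := realPart_mem C.1 x.2
lemma im_mem (x : C.1) : ((ℑ (x : A) : A)) ∈ C.1 := imaginaryPart_mem C.1 x.2

include hl

lemma charFun_add (x y : C.1) : charFun l C (x + y) = charFun l C x + charFun l C y := by
  unfold charFun
  have hx : ((x + y : C.1) : A) = (x : A) + (y : A) := rfl
  rw [hx, map_add, map_add]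
  rw [val_add hl (comm_of_mem C (re_mem C x) (re_mem C y)),
    val_add hl (comm_of_mem C (im_mem C x) (im_mem C y))]
  push_cast
  ring

lemma charFun_smul (z : ℂ) (x : C.1) : charFun l C (z • x) = z * charFun l C x := by
  unfold charFun
  have hx : ((z • x : C.1) : A) = z • (x : A) := rfl
  rw [hx, realPart_smul, imaginaryPart_smul]
  have hre : l (z.re • ℜ (x:A) - z.im • ℑ (x:A)) = z.re * l (ℜ (x:A)) - z.im * l (ℑ (x:A)) := by
    have := hl.linear z.re (-z.im) (ℜ (x:A)) (ℑ (x:A)) (z.re • ℜ (x:A) - z.im • ℑ (x:A))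
      (comm_of_mem C (re_mem C x) (im_mem C x)) (by push_cast; rw [neg_smul, sub_eq_add_neg])
    rw [this]; ring
  have him : l (z.re • ℑ (x:A) + z.im • ℜ (x:A)) = z.re * l (ℑ (x:A)) + z.im * l (ℜ (x:A)) := by
    exact hl.linear z.re z.im (ℑ (x:A)) (ℜ (x:A)) _
      (comm_of_mem C (im_mem C x) (re_mem C x)) (by push_cast; ring)
  rw [hre, him]
  apply Complex.ext <;> simp <;> ring

lemma charFun_sa {x : C.1} (hx : IsSelfAdjoint (x : A)) :
    charFun l C x = (l ⟨(x : A), hx⟩ : ℂ) := by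
  unfold charFun
  rw [show ℜ ((x : A)) = ⟨(x : A), hx⟩ from Subtype.ext hx.coe_realPart,
    hx.imaginaryPart, val_zero hl]
  push_cast
  ring

lemma charFun_one : charFun l C 1 = 1 := by
  have hx : IsSelfAdjoint ((1 : C.1) : A) := by simpa using IsSelfAdjoint.one (R := A)
  rw [charFun_sa hl C hx,
    show (⟨((1 : C.1) : A), hx⟩ : selfAdjoint A) = 1 from Subtype.ext (by simp),
    val_one hl, Complex.ofReal_one]

lemma charFun_zero : charFun l C 0 = 0 := by
  have hx : IsSelfAdjoint ((0 : C.1) : A) := by simpa using IsSelfAdjoint.zero (R := A)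
  rw [charFun_sa hl C hx,
    show (⟨((0 : C.1) : A), hx⟩ : selfAdjoint A) = 0 from Subtype.ext (by simp),
    val_zero hl, Complex.ofReal_zero]

end CharFun

end KSAux

namespace KSAux

lemma mul_sa {a c : selfAdjoint A} (h : (a : A) * (c : A) = (c : A) * (a : A)) :
    IsSelfAdjoint ((a : A) * (c : A)) := by
  rw [IsSelfAdjoint, star_mul, a.prop.star_eq, c.prop.star_eq]
  exact h.symm

section CharFun

variable {l : selfAdjoint A → ℝ} (hl : IsValuation A l) (C : CommCStarSubalg A)

include hl

lemma charFun_mul (x y : C.1) : charFun l C (x * y) = charFun l C x * charFun l C y := by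
  set a : selfAdjoint A := ℜ ((x : C.1) : A) with ha'
  set b : selfAdjoint A := ℑ ((x : C.1) : A) with hb'
  set c : selfAdjoint A := ℜ ((y : C.1) : A) with hc'
  set d : selfAdjoint A := ℑ ((y : C.1) : A) with hd'
  have hma : (a : A) ∈ C.1 := re_mem C x
  have hmb : (b : A) ∈ C.1 := im_mem C x
  have hmc : (c : A) ∈ C.1 := re_mem C y
  have hmd : (d : A) ∈ C.1 := im_mem C y
  have hac : IsSelfAdjoint ((a : A) * c) := mul_sa (comm_of_mem C hma hmc)
  have hbd : IsSelfAdjoint ((b : A) * d) := mul_sa (comm_of_mem C hmb hmd)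
  have had : IsSelfAdjoint ((a : A) * d) := mul_sa (comm_of_mem C hma hmd)
  have hbc : IsSelfAdjoint ((b : A) * c) := mul_sa (comm_of_mem C hmb hmc)
  set u : selfAdjoint A := ⟨(a : A) * c - (b : A) * d, hac.sub hbd⟩ with hu'
  set v : selfAdjoint A := ⟨(a : A) * d + (b : A) * c, had.add hbc⟩ with hv'
  have hdec : ((x * y : C.1) : A) = (u : A) + I • (v : A) := by
    show (x : A) * (y : A) = _
    conv_lhs => rw [← realPart_add_I_smul_imaginaryPart ((x : C.1) : A),
      ← realPart_add_I_smul_imaginaryPart ((y : C.1) : A)]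
    show ((a : A) + I • (b : A)) * ((c : A) + I • (d : A)) = ((a:A)*c - (b:A)*d) + I • ((a:A)*d + (b:A)*c)
    simp only [mul_add, add_mul, mul_smul_comm, smul_mul_assoc, smul_smul,
      Complex.I_mul_I, neg_one_smul, smul_add, sub_eq_add_neg]
    abel
  have hlu : l u = l a * l c - l b * l d := by
    have h1 := hl.linear 1 (-1) ⟨(a:A)*c, hac⟩ ⟨(b:A)*d, hbd⟩ u
      (comm_of_mem C (mul_mem hma hmc) (mul_mem hmb hmd))
      (by show ((a:A)*c - (b:A)*d) = _; rw [one_smul, neg_one_smul, sub_eq_add_neg])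
    rw [h1, val_mul hl C hma hmc (w := ⟨(a:A)*c, hac⟩) rfl,
      val_mul hl C hmb hmd (w := ⟨(b:A)*d, hbd⟩) rfl]
    ring
  have hlv : l v = l a * l d + l b * l c := by
    have h1 := hl.linear 1 1 ⟨(a:A)*d, had⟩ ⟨(b:A)*c, hbc⟩ v
      (comm_of_mem C (mul_mem hma hmd) (mul_mem hmb hmc))
      (by show ((a:A)*d + (b:A)*c) = _; rw [one_smul, one_smul])
    rw [h1, val_mul hl C hma hmd (w := ⟨(a:A)*d, had⟩) rfl,
      val_mul hl C hmb hmc (w := ⟨(b:A)*c, hbc⟩) rfl]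
    ring
  have hc1 : charFun l C (x * y) = (l u : ℂ) + (l v : ℂ) * I := by
    unfold charFun
    rw [hdec, realPart_decomp, imaginaryPart_decomp]
  rw [hc1, hlu, hlv]
  show _ = ((l a : ℂ) + (l b : ℂ) * I) * ((l c : ℂ) + (l d : ℂ) * I)
  apply Complex.ext <;> simp <;> ring

end CharFun

end KSAux

namespace KSAux

variable {l : selfAdjoint A → ℝ}

/-- The character attached to a valuation, as an algebra homomorphism. -/
noncomputable def valAlgHom (hl : IsValuation A l) (C : CommCStarSubalg A) :
    C.1 →ₐ[ℂ] ℂ where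
  toFun := charFun l C
  map_one' := charFun_one hl C
  map_mul' := charFun_mul hl C
  map_zero' := charFun_zero hl C
  map_add' := charFun_add hl C
  commutes' := fun z => by
    show charFun l C ((algebraMap ℂ C.1) z) = (algebraMap ℂ ℂ) z
    rw [show (algebraMap ℂ C.1) z = z • 1 from (Algebra.algebraMap_eq_smul_one z),
      charFun_smul hl C, charFun_one hl C, mul_one]
    rfl

/-- The character attached to a valuation. -/
noncomputable def valChar (hl : IsValuation A l) (C : CommCStarSubalg A) :
    characterSpace ℂ C.1 :=
  letI : CompleteSpace C.1 := C.2.1.completeSpace_coe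
  WeakDual.CharacterSpace.equivAlgHom.symm (valAlgHom hl C)

lemma valChar_apply (hl : IsValuation A l) (C : CommCStarSubalg A) (x : C.1) :
    valChar hl C x = charFun l C x := rfl

end KSAux

namespace KSAux

/-- Compatibility of a family of characters with restrictions. -/
def Compat (σ : (C : CommCStarSubalg A) → characterSpace ℂ C.1) : Prop :=
  ∀ (C D : CommCStarSubalg A) (h : C ≤ D), RestrictsTo h (σ D) (σ C)

lemma char_ext {C : CommCStarSubalg A} {φ ψ : characterSpace ℂ C.1}
    (h : ∀ x : C.1, φ x = ψ x) : φ = ψ :=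
  Subtype.ext (ContinuousLinearMap.ext h)

lemma continuous_of_compat {σ : (C : CommCStarSubalg A) → characterSpace ℂ C.1}
    (hσ : Compat σ) :
    Continuous fun C : CommCStarSubalg A => (⟨C, σ C⟩ : GelfandSpec A) := by
  rw [continuous_def]
  intro U hU
  show ∀ ⦃C D : CommCStarSubalg A⦄, C ≤ D →
    (⟨C, σ C⟩ : GelfandSpec A) ∈ U → (⟨D, σ D⟩ : GelfandSpec A) ∈ U
  intro C D h hm
  exact (hU : IsGoodOpen A U).2 C D h (σ C) (σ D) (hσ C D h) hm

lemma compat_of_continuous {σ : (C : CommCStarSubalg A) → characterSpace ℂ C.1}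
    (hσ : Continuous fun C : CommCStarSubalg A => (⟨C, σ C⟩ : GelfandSpec A)) :
    Compat σ := by
  intro C D h a
  by_contra hne
  set W : Set ℂ := {(σ D) ⟨a.1, h a.2⟩}ᶜ with hW
  have hWo : IsOpen W := isOpen_compl_singleton
  have hWz : (σ C) a ∈ W := fun hmem => hne (by simpa using hmem.symm)
  set U : Set (GelfandSpec A) :=
    {p | ∃ hm : (a : A) ∈ p.1.1, (p.2 ⟨a.1, hm⟩ : ℂ) ∈ W} with hU
  have hUopen : IsGoodOpen A U := by
    constructor
    · intro E
      by_cases hmE : (a : A) ∈ E.1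
      · have : {φ : characterSpace ℂ E.1 | (⟨E, φ⟩ : GelfandSpec A) ∈ U}
            = (fun φ : characterSpace ℂ E.1 => (φ ⟨a.1, hmE⟩ : ℂ)) ⁻¹' W := by
          ext φ
          constructor
          · rintro ⟨hm, hw⟩; exact hw
          · intro hw; exact ⟨hmE, hw⟩
        rw [this]
        have hev : Continuous fun φ : characterSpace ℂ E.1 => (φ ⟨a.1, hmE⟩ : ℂ) :=
          (WeakDual.eval_continuous (⟨a.1, hmE⟩ : E.1)).comp continuous_subtype_val
        exact hWo.preimage hev
      · have : {φ : characterSpace ℂ E.1 | (⟨E, φ⟩ : GelfandSpec A) ∈ U} = ∅ := by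
          ext φ
          simp only [Set.mem_setOf_eq, Set.mem_empty_iff_false, iff_false]
          rintro ⟨hm, _⟩
          exact hmE hm
        rw [this]; exact isOpen_empty
    · rintro C' D' h' φ ψ hr ⟨hm, hw⟩
      refine ⟨h' hm, ?_⟩
      rw [show (ψ ⟨a.1, h' hm⟩ : ℂ) = φ ⟨a.1, hm⟩ from hr ⟨a.1, hm⟩]
      exact hw
  have hpre : IsOpen ((fun C : CommCStarSubalg A => (⟨C, σ C⟩ : GelfandSpec A)) ⁻¹' U) :=
    hσ.isOpen_preimage U hUopen
  have hCmem : C ∈ (fun C : CommCStarSubalg A => (⟨C, σ C⟩ : GelfandSpec A)) ⁻¹' U :=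
    ⟨a.2, hWz⟩
  have hDmem := (hpre : ∀ ⦃C' D' : CommCStarSubalg A⦄, C' ≤ D' → _ → _) h hCmem
  obtain ⟨hm, hw⟩ := hDmem
  exact hw rfl

end KSAux

namespace KSAux

set_option maxHeartbeats 2000000 in
set_option synthInstance.maxHeartbeats 400000 in
lemma char_real (C : CommCStarSubalg A) (φ : characterSpace ℂ C.1) {a : A}
    (ha : a ∈ C.1) (hsa : IsSelfAdjoint a) :
    φ ⟨a, ha⟩ = (((φ ⟨a, ha⟩).re : ℝ) : ℂ) := by
  letI : CStarAlgebra A := {}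
  letI : CStarAlgebra C.1 := { toCompleteSpace := C.2.1.completeSpace_coe }
  letI hsh := WeakDual.CharacterSpace.instStarHomClass (A := C.1)
  have hsa' : IsSelfAdjoint (⟨a, ha⟩ : C.1) := Subtype.ext hsa
  have hstar : (starRingEnd ℂ) (φ ⟨a, ha⟩) = φ ⟨a, ha⟩ := by
    have h1 := hsh.map_star φ (⟨a, ha⟩ : C.1)
    rw [hsa'.star_eq] at h1
    exact h1.symm
  exact (Complex.conj_eq_iff_re.mp hstar).symm

/-- The valuation attached to a section of the Gelfand spectrum bundle. -/
noncomputable def secVal (σ : (C : CommCStarSubalg A) → characterSpace ℂ C.1) :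
    selfAdjoint A → ℝ :=
  fun a => (σ (elemC a) ⟨(a : A), self_mem_elemC a⟩).re

lemma secVal_spec {σ : (C : CommCStarSubalg A) → characterSpace ℂ C.1}
    (hσ : Compat σ) (C : CommCStarSubalg A) {a : A} (ha : a ∈ C.1)
    (hsa : IsSelfAdjoint a) :
    σ C ⟨a, ha⟩ = ((secVal σ ⟨a, hsa⟩ : ℝ) : ℂ) := by
  have hle : elemC ⟨a, hsa⟩ ≤ C := elemC_le ha
  have h1 : σ C ⟨a, ha⟩ = σ (elemC ⟨a, hsa⟩) ⟨a, self_mem_elemC ⟨a, hsa⟩⟩ :=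
    hσ (elemC ⟨a, hsa⟩) C hle ⟨a, self_mem_elemC ⟨a, hsa⟩⟩
  rw [h1]
  exact char_real _ _ _ hsa

end KSAux

namespace KSAux

section Comm2

variable {a b : A} (ha : IsSelfAdjoint a) (hb : IsSelfAdjoint b) (hab : a * b = b * a)

/-- The double centralizer of a pair of commuting self-adjoint elements, as a commutative
unital C*-subalgebra. -/
def comm2 : CommCStarSubalg A := by
  set T : Subalgebra ℂ A := Subalgebra.centralizer ℂ ({a, b} : Set A) with hT
  have hstar_of : ∀ (s : Set A), (∀ y ∈ s, star y ∈ s) →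
      ∀ x ∈ Subalgebra.centralizer ℂ s, star x ∈ Subalgebra.centralizer ℂ s := by
    intro s hs x hx
    rw [Subalgebra.mem_centralizer_iff] at hx ⊢
    intro g hg
    have h1 := hx (star g) (hs g hg)
    calc g * star x = star (x * star g) := by rw [star_mul, star_star]
      _ = star (star g * x) := by rw [h1]
      _ = star x * g := by rw [star_mul, star_star]
  have ma : ∀ u v : A, (u = a ∨ u = b) → (v = a ∨ v = b) → u * v = v * u := by
    rintro u v (rfl | rfl) (rfl | rfl)
    · rfl
    · exact hab
    · exact hab.symm
    · rfl
  have hs0 : ∀ y ∈ ({a, b} : Set A), star y ∈ ({a, b} : Set A) := by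
    intro y hy
    simp only [Set.mem_insert_iff, Set.mem_singleton_iff] at hy ⊢
    rcases hy with rfl | rfl
    · exact Or.inl ha.star_eq
    · exact Or.inr hb.star_eq
  have hsub : ({a, b} : Set A) ⊆ (T : Set A) := by
    intro g hg
    rw [SetLike.mem_coe, hT, Subalgebra.mem_centralizer_iff]
    intro m hm
    simp only [Set.mem_insert_iff, Set.mem_singleton_iff] at hg hm
    exact ma m g hm hg
  refine ⟨{ Subalgebra.centralizer ℂ (T : Set A) with star_mem' := ?_ }, ?_, ?_⟩
  · intro x hx
    exact hstar_of (T : Set A) (fun y hy => hstar_of _ hs0 y hy) x hx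
  · have hset : ((Subalgebra.centralizer ℂ (T : Set A) : Subalgebra ℂ A) : Set A)
        = ⋂ g ∈ (T : Set A), {x : A | g * x = x * g} := by
      ext x
      simp only [SetLike.mem_coe, Subalgebra.mem_centralizer_iff, Set.mem_iInter,
        Set.mem_setOf_eq]
    show IsClosed ((Subalgebra.centralizer ℂ (T : Set A) : Subalgebra ℂ A) : Set A)
    rw [hset]
    exact isClosed_biInter fun g _ => isClosed_eq (continuous_mul_left g)
      (continuous_mul_right g)
  · intro x hx y hy
    have hx' : x ∈ T := by
      rw [hT, Subalgebra.mem_centralizer_iff]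
      intro m hm
      exact (Subalgebra.mem_centralizer_iff ℂ).mp hx m (hsub hm)
    exact (Subalgebra.mem_centralizer_iff ℂ).mp hy x hx'

lemma left_mem_comm2 : a ∈ (comm2 ha hb hab).1 := by
  show a ∈ Subalgebra.centralizer ℂ _
  rw [Subalgebra.mem_centralizer_iff]
  intro g hg
  exact ((Subalgebra.mem_centralizer_iff ℂ).mp hg a (by exact Or.inl rfl)).symm

lemma right_mem_comm2 : b ∈ (comm2 ha hb hab).1 := by
  show b ∈ Subalgebra.centralizer ℂ _
  rw [Subalgebra.mem_centralizer_iff]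
  intro g hg
  exact ((Subalgebra.mem_centralizer_iff ℂ).mp hg b (by exact Or.inr rfl)).symm

end Comm2

end KSAux

namespace KSAux

lemma rsmul_eq (r : ℝ) (z : A) : r • z = (r : ℂ) • z := by
  rw [← smul_one_smul ℂ r z, Complex.real_smul, mul_one]

section SecVal

variable {σ : (C : CommCStarSubalg A) → characterSpace ℂ C.1} (hσ : Compat σ)

include hσ

lemma secVal_one : secVal σ 1 = 1 := by
  set C := elemC (1 : selfAdjoint A) with hC
  have hma : ((1 : selfAdjoint A) : A) ∈ C.1 := self_mem_elemC 1
  have h := secVal_spec hσ C hma (1 : selfAdjoint A).2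
  have h2 : σ C ⟨((1 : selfAdjoint A) : A), hma⟩ = 1 := by
    have he : (⟨((1 : selfAdjoint A) : A), hma⟩ : C.1) = 1 := Subtype.ext (by simp)
    rw [he]; exact map_one (σ C)
  rw [h2] at h
  have h3 : (⟨((1 : selfAdjoint A) : A), (1 : selfAdjoint A).2⟩ : selfAdjoint A)
      = 1 := Subtype.ext rfl
  rw [h3] at h
  exact_mod_cast h.symm

lemma secVal_dispersionFree (a b : selfAdjoint A) (hb : (b : A) = (a : A) * (a : A)) :
    secVal σ b = secVal σ a ^ 2 := by
  set C := elemC a with hC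
  have hma : (a : A) ∈ C.1 := self_mem_elemC a
  have hmb : (b : A) ∈ C.1 := hb ▸ mul_mem hma hma
  have h1 := secVal_spec hσ C hmb b.2
  have h2 := secVal_spec hσ C hma a.2
  have h3 : (⟨(b : A), hmb⟩ : C.1) = ⟨(a : A), hma⟩ * ⟨(a : A), hma⟩ := Subtype.ext hb
  have h4 : σ C ⟨(b : A), hmb⟩ = σ C ⟨(a : A), hma⟩ * σ C ⟨(a : A), hma⟩ := by
    rw [h3]; exact map_mul (σ C) _ _
  rw [h1, h2] at h4
  have h5 : ((secVal σ ⟨(b : A), b.2⟩ : ℝ) : ℂ) = ((secVal σ ⟨(a : A), a.2⟩ ^ 2 : ℝ) : ℂ) := by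
    rw [h4]; push_cast; ring
  have h6 := Complex.ofReal_inj.mp h5
  simpa using h6

lemma secVal_linear (s t : ℝ) (a b c : selfAdjoint A)
    (hab : (a : A) * (b : A) = (b : A) * (a : A))
    (hc : (c : A) = s • (a : A) + t • (b : A)) :
    secVal σ c = s * secVal σ a + t * secVal σ b := by
  set C := comm2 a.2 b.2 hab with hC
  have hma : (a : A) ∈ C.1 := left_mem_comm2 a.2 b.2 hab
  have hmb : (b : A) ∈ C.1 := right_mem_comm2 a.2 b.2 hab
  have hmc : (c : A) ∈ C.1 := by
    rw [hc]; exact add_mem (rsmul_mem _ hma s) (rsmul_mem _ hmb t)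
  have h3 : (⟨(c : A), hmc⟩ : C.1)
      = (s : ℂ) • ⟨(a : A), hma⟩ + (t : ℂ) • ⟨(b : A), hmb⟩ := by
    apply Subtype.ext
    show (c : A) = (s : ℂ) • (a : A) + (t : ℂ) • (b : A)
    rw [hc, rsmul_eq, rsmul_eq]
  have h4 : σ C ⟨(c : A), hmc⟩
      = (s : ℂ) * σ C ⟨(a : A), hma⟩ + (t : ℂ) * σ C ⟨(b : A), hmb⟩ := by
    rw [h3, map_add, map_smul, map_smul, smul_eq_mul, smul_eq_mul]
  rw [secVal_spec hσ C hmc c.2, secVal_spec hσ C hma a.2, secVal_spec hσ C hmb b.2] at h4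
  have h5 : ((secVal σ ⟨(c : A), c.2⟩ : ℝ) : ℂ)
      = ((s * secVal σ ⟨(a : A), a.2⟩ + t * secVal σ ⟨(b : A), b.2⟩ : ℝ) : ℂ) := by
    rw [h4]; push_cast; ring
  have h6 := Complex.ofReal_inj.mp h5
  simpa using h6

lemma secVal_isValuation : IsValuation A (secVal σ) := by
  refine ⟨?_, secVal_dispersionFree hσ, secVal_linear hσ⟩
  intro h
  have := secVal_one hσ
  rw [h, Pi.zero_apply] at this
  exact zero_ne_one this

end SecVal

end KSAux

namespace KSAux

variable {l : selfAdjoint A → ℝ}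

lemma valChar_compat (hl : IsValuation A l) : Compat (fun C => valChar hl C) := by
  intro C D h a
  rw [valChar_apply, valChar_apply]
  rfl

lemma valChar_sa (hl : IsValuation A l) (C : CommCStarSubalg A) {a : A} (ha : a ∈ C.1)
    (hsa : IsSelfAdjoint a) :
    valChar hl C ⟨a, ha⟩ = ((l ⟨a, hsa⟩ : ℝ) : ℂ) := by
  rw [valChar_apply, charFun_sa hl C hsa]

lemma char_eq_of_sa {C : CommCStarSubalg A} {φ ψ : characterSpace ℂ C.1}
    (h : ∀ (a : A) (ha : a ∈ C.1), IsSelfAdjoint a → φ ⟨a, ha⟩ = ψ ⟨a, ha⟩) : φ = ψ := by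
  apply char_ext
  intro x
  have hx : x = (⟨(ℜ ((x : C.1) : A) : A), re_mem C x⟩ : C.1)
      + Complex.I • (⟨(ℑ ((x : C.1) : A) : A), im_mem C x⟩ : C.1) := by
    apply Subtype.ext
    show (x : A) = (ℜ ((x : C.1) : A) : A) + Complex.I • (ℑ ((x : C.1) : A) : A)
    exact (realPart_add_I_smul_imaginaryPart ((x : C.1) : A)).symm
  rw [hx, map_add, map_add, map_smul, map_smul,
    h _ (re_mem C x) (ℜ ((x : C.1) : A)).2, h _ (im_mem C x) (ℑ ((x : C.1) : A)).2]

end KSAux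
open KSAux in
/-- There is a bijective correspondence between valuations on `A` and continuous
cross-sections `σ : 𝒞(A) → Σ` of `π`, under which a valuation `λ` and a continuous
cross-section `σ` correspond iff `σ(C)(a) = λ(a)` for all `C ∈ 𝒞(A)` and all
self-adjoint `a ∈ C`. -/
theorem valuations_equiv_continuous_sections :
    ∃ e : {l : selfAdjoint A → ℝ // IsValuation A l} ≃
        {σ : (C : CommCStarSubalg A) → characterSpace ℂ C.1 //
          Continuous fun C : CommCStarSubalg A => (⟨C, σ C⟩ : GelfandSpec A)},
      ∀ l σ, e l = σ ↔
        ∀ (C : CommCStarSubalg A) (a : A) (ha : a ∈ C.1) (hsa : IsSelfAdjoint a),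
          (σ.1 C) (⟨a, ha⟩ : C.1) = ((l.1 ⟨a, hsa⟩ : ℝ) : ℂ) := by
  classical
  refine ⟨⟨fun l => ⟨fun C => valChar l.2 C, continuous_of_compat (valChar_compat l.2)⟩,
    fun σ => ⟨secVal σ.1, secVal_isValuation (compat_of_continuous σ.2)⟩, ?_, ?_⟩, ?_⟩
  · -- left inverse
    intro l
    apply Subtype.ext
    funext a
    show secVal (fun C => valChar l.2 C) a = l.1 a
    unfold secVal
    rw [valChar_sa l.2 (elemC a) (self_mem_elemC a) a.2]
    simp
  · -- right inverse
    intro σ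
    apply Subtype.ext
    funext C
    apply char_eq_of_sa
    intro a ha hsa
    rw [valChar_sa _ C ha hsa,
      secVal_spec (compat_of_continuous σ.2) C ha hsa]
  · -- characterization
    intro l σ
    constructor
    · rintro rfl
      intro C a ha hsa
      exact valChar_sa l.2 C ha hsa
    · intro hcond
      apply Subtype.ext
      funext C
      apply char_eq_of_sa
      intro a ha hsa
      show valChar l.2 C ⟨a, ha⟩ = (σ.1 C) ⟨a, ha⟩
      rw [valChar_sa l.2 C ha hsa, hcond C a ha hsa]
end

section
/- If the unital C*-algebra A admits no valuation, then the projection π : Σ → 𝒞(A) admits no continuous cross-section, i.e. there is no continuous σ : 𝒞(A) → Σ with π ∘ σ = id. -/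
open WeakDual WeakDual.CharacterSpace

variable (A : Type*) [NormedRing A] [StarRing A] [CStarRing A] [NormedAlgebra ℂ A]
  [StarModule ℂ A] [CompleteSpace A]

variable {A}

variable (A)

section Auxiliary

set_option linter.unusedSectionVars false

variable {A}

private lemma sigma_fix {p : GelfandSpec A} {C : CommCStarSubalg A} (h : p.1 = C) :
    p = ⟨C, h ▸ p.2⟩ := by
  cases p; subst h; rfl

/-- The commutative C*-subalgebra generated by a self-adjoint element. -/
noncomputable def elemComm (a : selfAdjoint A) : CommCStarSubalg A :=
  ⟨StarAlgebra.elemental ℂ (a : A), StarAlgebra.elemental.isClosed ℂ _, fun x hx y hy => by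
    letI := a.2.isStarNormal
    exact congrArg Subtype.val
      (mul_comm (⟨x, hx⟩ : StarAlgebra.elemental ℂ (a : A)) ⟨y, hy⟩)⟩

lemma mem_elemComm (a : selfAdjoint A) : (a : A) ∈ (elemComm a).1 :=
  StarAlgebra.elemental.self_mem ℂ (a : A)

lemma elemComm_le {a : selfAdjoint A} {C : CommCStarSubalg A} (ha : (a : A) ∈ C.1) :
    elemComm a ≤ C :=
  StarAlgebra.elemental.le_of_mem C.2.1 ha

/-- The commutative C*-subalgebra generated by two commuting self-adjoint elements. -/
noncomputable def pairComm (a b : selfAdjoint A)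
    (hab : (a : A) * (b : A) = (b : A) * (a : A)) : CommCStarSubalg A := by
  refine ⟨(StarAlgebra.adjoin ℂ {(a : A), (b : A)}).topologicalClosure,
    StarSubalgebra.isClosed_topologicalClosure _, ?_⟩
  have hcomm : ∀ x ∈ ({(a : A), (b : A)} : Set A), ∀ y ∈ ({(a : A), (b : A)} : Set A),
      x * y = y * x := by
    intro x hx y hy
    rcases Set.mem_insert_iff.mp hx with rfl | hx <;>
      rcases Set.mem_insert_iff.mp hy with rfl | hy
    · rfl
    · rw [Set.mem_singleton_iff.mp hy]; exact hab
    · rw [Set.mem_singleton_iff.mp hx]; exact hab.symm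
    · rw [Set.mem_singleton_iff.mp hx, Set.mem_singleton_iff.mp hy]
  have hstar : ∀ x ∈ ({(a : A), (b : A)} : Set A), star x = x := by
    intro x hx
    rcases Set.mem_insert_iff.mp hx with rfl | hx
    · exact a.2
    · rw [Set.mem_singleton_iff.mp hx]; exact b.2
  letI : CommSemiring (StarAlgebra.adjoin ℂ ({(a : A), (b : A)} : Set A)) :=
    StarAlgebra.adjoinCommSemiringOfComm ℂ hcomm
      (fun x hx y hy => by rw [hstar y hy]; exact hcomm x hx y hy)
  letI : CommSemiring (StarAlgebra.adjoin ℂ ({(a : A), (b : A)} : Set A)).topologicalClosure :=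
    StarSubalgebra.commSemiringTopologicalClosure _ mul_comm
  exact fun x hx y hy => congrArg Subtype.val
    (mul_comm (⟨x, hx⟩ :
      (StarAlgebra.adjoin ℂ ({(a : A), (b : A)} : Set A)).topologicalClosure) ⟨y, hy⟩)

lemma left_mem_pairComm (a b : selfAdjoint A)
    (hab : (a : A) * (b : A) = (b : A) * (a : A)) : (a : A) ∈ (pairComm a b hab).1 :=
  StarSubalgebra.le_topologicalClosure _
    (StarAlgebra.subset_adjoin ℂ _ (Set.mem_insert _ _))

lemma right_mem_pairComm (a b : selfAdjoint A)
    (hab : (a : A) * (b : A) = (b : A) * (a : A)) : (b : A) ∈ (pairComm a b hab).1 :=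
  StarSubalgebra.le_topologicalClosure _
    (StarAlgebra.subset_adjoin ℂ _ (Set.mem_insert_of_mem _ rfl))

/-- Characters take real values on self-adjoint elements. -/
lemma char_im_zero (C : CommCStarSubalg A) (φ : characterSpace ℂ C.1) (x : C.1)
    (hx : IsSelfAdjoint (x : A)) : (φ x).im = 0 := by
  haveI : CompleteSpace C.1 := C.2.1.completeSpace_coe
  letI : CStarAlgebra C.1 := {}
  have hxs : star x = x := Subtype.ext hx
  have h := map_star φ x
  rw [hxs] at h
  exact Complex.conj_eq_iff_im.mp h.symm

/-- A continuous section of `π` is compatible with restrictions. -/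
lemma section_restricts {σ : CommCStarSubalg A → GelfandSpec A} (hcont : Continuous σ)
    (hsec : ∀ C, (σ C).1 = C) {C D : CommCStarSubalg A} (h : C ≤ D) :
    RestrictsTo h ((hsec D) ▸ (σ D).2) ((hsec C) ▸ (σ C).2) := by
  set χ : (E : CommCStarSubalg A) → characterSpace ℂ E.1 :=
    fun E => (hsec E) ▸ (σ E).2 with hχ
  have hσ : ∀ E, σ E = ⟨E, χ E⟩ := fun E => sigma_fix (hsec E)
  show RestrictsTo h (χ D) (χ C)
  by_contra hres
  rw [RestrictsTo, not_forall] at hres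
  obtain ⟨a0, ha0⟩ := hres
  set c : ℂ := χ D ⟨a0.1, h a0.2⟩ with hc
  set U : Set (GelfandSpec A) :=
    {p | ∃ hE : C ≤ p.1, (p.2 ⟨a0.1, hE a0.2⟩ : ℂ) ≠ c} with hU
  have hUopen : IsOpen U := by
    constructor
    · intro E
      by_cases hE : C ≤ E
      · have : {φ : characterSpace ℂ E.1 | (⟨E, φ⟩ : GelfandSpec A) ∈ U}
            = (fun φ : characterSpace ℂ E.1 => (φ ⟨a0.1, hE a0.2⟩ : ℂ)) ⁻¹' {c}ᶜ := by
          ext φ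
          constructor
          · rintro ⟨h', hne⟩; exact hne
          · intro hne; exact ⟨hE, hne⟩
        rw [this]
        exact IsOpen.preimage
          ((WeakDual.eval_continuous _).comp continuous_subtype_val) isOpen_compl_singleton
      · have : {φ : characterSpace ℂ E.1 | (⟨E, φ⟩ : GelfandSpec A) ∈ U} = ∅ := by
          ext φ
          simp only [Set.mem_setOf_eq, Set.mem_empty_iff_false, iff_false]
          rintro ⟨h', _⟩; exact hE h'
        rw [this]; exact isOpen_empty
    · rintro E F hEF φ ψ hr ⟨hCE, hne⟩
      refine ⟨hCE.trans hEF, ?_⟩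
      have hrest := hr ⟨a0.1, hCE a0.2⟩
      show ψ ⟨a0.1, hEF (hCE a0.2)⟩ ≠ c
      intro hcc
      exact hne (hrest.symm.trans hcc)
  have hpre : IsOpen (σ ⁻¹' U) := hUopen.preimage hcont
  have hCmem : C ∈ σ ⁻¹' U := by
    show σ C ∈ U
    rw [hσ C]
    refine ⟨le_refl C, ?_⟩
    have heq : (⟨a0.1, (le_refl C) a0.2⟩ : C.1) = a0 := Subtype.ext rfl
    rw [heq]
    intro hcc
    exact ha0 (hcc ▸ rfl)
  have hDmem : D ∈ σ ⁻¹' U := hpre h hCmem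
  rw [Set.mem_preimage, hσ D] at hDmem
  obtain ⟨hCD', hne'⟩ := hDmem
  exact hne' rfl

end Auxiliary

/-- If `A` admits no valuation, then the projection `π : Σ → 𝒞(A)` admits no continuous
cross-section. -/
theorem no_continuous_section_of_no_valuation
    (h : ∀ l : selfAdjoint A → ℝ, ¬ IsValuation A l) :
    ¬ ∃ σ : CommCStarSubalg A → GelfandSpec A,
        Continuous σ ∧ ∀ C : CommCStarSubalg A, (σ C).1 = C := by
  rintro ⟨σ, hcont, hsec⟩
  set χ : (E : CommCStarSubalg A) → characterSpace ℂ E.1 :=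
    fun E => (hsec E) ▸ (σ E).2 with hχ
  have key : ∀ {C D : CommCStarSubalg A} (hCD : C ≤ D) (x : C.1),
      χ D ⟨x.1, hCD x.2⟩ = χ C x := fun hCD x => section_restricts hcont hsec hCD x
  set l : selfAdjoint A → ℝ := fun a => (χ (elemComm a) ⟨(a : A), mem_elemComm a⟩).re with hl
  refine h l ⟨?_, ?_, ?_⟩
  · -- ne_zero
    intro h0
    have h1 : l 1 = 0 := congrFun h0 1
    have : (⟨((1 : selfAdjoint A) : A), mem_elemComm 1⟩ : (elemComm 1).1.1) = 1 :=
      Subtype.ext rfl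
    rw [hl] at h1
    simp only [this, map_one, Complex.one_re] at h1
    exact one_ne_zero h1
  · -- dispersion free
    intro a b hba
    have hbmem : (b : A) ∈ (elemComm a).1 := by
      rw [hba]; exact mul_mem (mem_elemComm a) (mem_elemComm a)
    have hle : elemComm b ≤ elemComm a := elemComm_le hbmem
    have h1 : χ (elemComm a) ⟨(b : A), hle (mem_elemComm b)⟩
        = χ (elemComm b) ⟨(b : A), mem_elemComm b⟩ := key hle ⟨(b : A), mem_elemComm b⟩
    have h2 : (⟨(b : A), hle (mem_elemComm b)⟩ : (elemComm a).1.1)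
        = ⟨(a : A), mem_elemComm a⟩ * ⟨(a : A), mem_elemComm a⟩ := Subtype.ext hba
    have him : (χ (elemComm a) ⟨(a : A), mem_elemComm a⟩).im = 0 :=
      char_im_zero _ _ _ a.2
    rw [hl]
    dsimp only
    rw [← h1, h2, map_mul, Complex.mul_re, him]
    ring
  · -- linearity
    intro s t a b c hab hc
    set D := pairComm a b hab with hD
    have haD : (a : A) ∈ D.1 := left_mem_pairComm a b hab
    have hbD : (b : A) ∈ D.1 := right_mem_pairComm a b hab
    have hcD : (c : A) ∈ D.1 := by
      rw [hc, ← algebraMap_smul ℂ s ((a : A)), ← algebraMap_smul ℂ t ((b : A))]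
      exact add_mem (SMulMemClass.smul_mem _ haD) (SMulMemClass.smul_mem _ hbD)
    have hkc : χ D ⟨(c : A), elemComm_le hcD (mem_elemComm c)⟩
        = χ (elemComm c) ⟨(c : A), mem_elemComm c⟩ :=
      key (elemComm_le hcD) ⟨(c : A), mem_elemComm c⟩
    have hka : χ D ⟨(a : A), elemComm_le haD (mem_elemComm a)⟩
        = χ (elemComm a) ⟨(a : A), mem_elemComm a⟩ :=
      key (elemComm_le haD) ⟨(a : A), mem_elemComm a⟩
    have hkb : χ D ⟨(b : A), elemComm_le hbD (mem_elemComm b)⟩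
        = χ (elemComm b) ⟨(b : A), mem_elemComm b⟩ :=
      key (elemComm_le hbD) ⟨(b : A), mem_elemComm b⟩
    have hsum : (⟨(c : A), elemComm_le hcD (mem_elemComm c)⟩ : D.1)
        = (s : ℂ) • ⟨(a : A), elemComm_le haD (mem_elemComm a)⟩
          + (t : ℂ) • ⟨(b : A), elemComm_le hbD (mem_elemComm b)⟩ := by
      apply Subtype.ext
      show (c : A) = (s : ℂ) • (a : A) + (t : ℂ) • (b : A)
      rw [← Complex.coe_algebraMap, algebraMap_smul ℂ s ((a : A)),
        algebraMap_smul ℂ t ((b : A))]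
      exact hc
    rw [hl]
    dsimp only
    rw [← hkc, ← hka, ← hkb, hsum, map_add, map_smul, map_smul]
    simp only [Complex.add_re, Complex.smul_re]
    simp [Complex.smul_re]
end

section
/- Suppose the unital C*-algebra A satisfies the ascending chain condition on commutative unital C*-subalgebras: every chain C₁ ⊆ C₂ ⊆ ⋯ in 𝒞(A) stabilizes, i.e. there exists m such that Cₙ = Cₘ for all n > m. Then the topological space Σ is sober: it is T0 and every irreducible closed subset of Σ is the closure of a (unique) point. -/
open WeakDual WeakDual.CharacterSpace

variable (A : Type*) [NormedRing A] [StarRing A] [CStarRing A] [NormedAlgebra ℂ A]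
  [StarModule ℂ A] [CompleteSpace A]

variable {A}

variable (A)

section Aux

variable {A}

/-- The inclusion `C → D` as a continuous linear map. -/
noncomputable def inclCLM {C D : CommCStarSubalg A} (h : C ≤ D) : C.1 →L[ℂ] D.1 :=
  { toFun := fun a => (⟨a.1, h a.2⟩ : D.1)
    map_add' := fun a b => rfl
    map_smul' := fun c a => rfl
    cont := Continuous.subtype_mk continuous_subtype_val _ }

/-- Restriction of a character along an inclusion `C ≤ D`. -/
noncomputable def restrictChar {C D : CommCStarSubalg A} (h : C ≤ D)
    (ψ : characterSpace ℂ D.1) : characterSpace ℂ C.1 :=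
  ⟨(ψ : WeakDual ℂ D.1).comp (inclCLM h), by
    constructor
    · intro hz
      have h1 : ψ ((⟨(1 : C.1).1, h (1 : C.1).2⟩ : D.1)) = 0 :=
        congrFun (congrArg DFunLike.coe hz) (1 : C.1)
      have h2 : ((⟨(1 : C.1).1, h (1 : C.1).2⟩ : D.1)) = (1 : D.1) := rfl
      rw [h2, map_one] at h1
      exact one_ne_zero h1
    · intro x y
      have h2 : ((⟨((x * y) : C.1).1, h ((x * y) : C.1).2⟩ : D.1))
          = (⟨x.1, h x.2⟩ : D.1) * (⟨y.1, h y.2⟩ : D.1) := rfl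
      show ψ (⟨((x * y) : C.1).1, h ((x * y) : C.1).2⟩ : D.1)
          = ψ (⟨x.1, h x.2⟩ : D.1) * ψ (⟨y.1, h y.2⟩ : D.1)
      rw [h2, map_mul]⟩

lemma restrictsTo_restrictChar {C D : CommCStarSubalg A} (h : C ≤ D)
    (ψ : characterSpace ℂ D.1) : RestrictsTo h ψ (restrictChar h ψ) :=
  fun _ => rfl

/-- The up-set of `C` in `Σ`. -/
def UpSet (C : CommCStarSubalg A) : Set (GelfandSpec A) := {p | C ≤ p.1}

lemma isOpen_upSet (C : CommCStarSubalg A) : IsOpen (UpSet C) := by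
  refine ⟨fun D => ?_, fun C' D h φ ψ hr hm => le_trans hm h⟩
  by_cases hCD : C ≤ D
  · have : {φ : characterSpace ℂ D.1 | (⟨D, φ⟩ : GelfandSpec A) ∈ UpSet C} = Set.univ := by
      ext φ; simp [UpSet, hCD]
    rw [this]; exact isOpen_univ
  · have : {φ : characterSpace ℂ D.1 | (⟨D, φ⟩ : GelfandSpec A) ∈ UpSet C} = ∅ := by
      ext φ; simp [UpSet, hCD]
    rw [this]; exact isOpen_empty

/-- A basic "ball" open set in `Σ`. -/
def SpecBall (C : CommCStarSubalg A) (a : C.1) (z : ℂ) (ε : ℝ) : Set (GelfandSpec A) :=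
  {p | ∃ h : C ≤ p.1, ‖p.2 ⟨a.1, h a.2⟩ - z‖ < ε}

lemma isOpen_specBall (C : CommCStarSubalg A) (a : C.1) (z : ℂ) (ε : ℝ) :
    IsOpen (SpecBall C a z ε) := by
  constructor
  · intro D
    by_cases hCD : C ≤ D
    · have he : {φ : characterSpace ℂ D.1 | (⟨D, φ⟩ : GelfandSpec A) ∈ SpecBall C a z ε}
          = (fun φ : characterSpace ℂ D.1 => φ ⟨a.1, hCD a.2⟩) ⁻¹' Metric.ball z ε := by
        ext φ
        simp only [SpecBall, Set.mem_setOf_eq, Set.mem_preimage, Metric.mem_ball,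
          dist_eq_norm]
        exact ⟨fun ⟨h, hb⟩ => hb, fun hb => ⟨hCD, hb⟩⟩
      rw [he]
      exact Metric.isOpen_ball.preimage
        ((WeakDual.eval_continuous (⟨a.1, hCD a.2⟩ : D.1)).comp continuous_subtype_val)
    · have he : {φ : characterSpace ℂ D.1 | (⟨D, φ⟩ : GelfandSpec A) ∈ SpecBall C a z ε}
          = ∅ := by
        ext φ
        simp only [SpecBall, Set.mem_setOf_eq, Set.mem_empty_iff_false, iff_false,
          not_exists]
        exact fun h => absurd h hCD
      rw [he]; exact isOpen_empty
  · rintro C' D h φ ψ hr ⟨hC, hb⟩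
    refine ⟨hC.trans h, ?_⟩
    rw [show ψ ⟨a.1, (hC.trans h) a.2⟩ = φ ⟨a.1, hC a.2⟩ from hr ⟨a.1, hC a.2⟩]
    exact hb

lemma mem_of_isClosed_restrict {F : Set (GelfandSpec A)} (hF : IsClosed F)
    {C D : CommCStarSubalg A} (h : C ≤ D) {ψ : characterSpace ℂ D.1}
    (hψ : (⟨D, ψ⟩ : GelfandSpec A) ∈ F) :
    (⟨C, restrictChar h ψ⟩ : GelfandSpec A) ∈ F := by
  by_contra hc
  have hopen : IsGoodOpen A Fᶜ := hF.isOpen_compl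
  exact hopen.2 C D h _ ψ (restrictsTo_restrictChar h ψ) hc hψ

end Aux

/-- If `A` satisfies the ascending chain condition on commutative unital C*-subalgebras
(every increasing chain `C₁ ⊆ C₂ ⊆ ⋯` stabilizes), then `Σ` is sober: it is T0 and every
irreducible closed subset is the closure of a point. -/
theorem sober_of_acc
    (hacc : ∀ c : ℕ → CommCStarSubalg A, (∀ n, c n ≤ c (n + 1)) →
      ∃ m, ∀ n, m < n → c n = c m) :
    T0Space (GelfandSpec A) ∧ QuasiSober (GelfandSpec A) := by
  constructor
  · -- T0
    rw [t0Space_iff_inseparable]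
    rintro ⟨C, φ⟩ ⟨D, ψ⟩ hins
    have hio := inseparable_iff_forall_isOpen.mp hins
    have hCD : C ≤ D := (hio (UpSet C) (isOpen_upSet C)).mp (le_refl C)
    have hDC : D ≤ C := (hio (UpSet D) (isOpen_upSet D)).mpr (le_refl D)
    have hE : C = D := le_antisymm hCD hDC
    subst hE
    suffices hps : φ = ψ by rw [hps]
    by_contra hne
    have ha : ∃ a : C.1, φ a ≠ ψ a := by
      by_contra hc
      push_neg at hc
      exact hne (CharacterSpace.ext hc)
    obtain ⟨a, ha⟩ := ha
    have hpos : (0 : ℝ) < ‖φ a - ψ a‖ := by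
      rw [norm_pos_iff]; exact sub_ne_zero.mpr ha
    have hx : (⟨C, φ⟩ : GelfandSpec A) ∈ SpecBall C a (φ a) ‖φ a - ψ a‖ := by
      refine ⟨le_refl C, ?_⟩
      have : φ (⟨a.1, (le_refl C) a.2⟩ : C.1) = φ a := rfl
      rw [this, sub_self, norm_zero]; exact hpos
    have hy : (⟨C, ψ⟩ : GelfandSpec A) ∈ SpecBall C a (φ a) ‖φ a - ψ a‖ :=
      (hio _ (isOpen_specBall C a (φ a) ‖φ a - ψ a‖)).mp hx
    obtain ⟨h', hb⟩ := hy
    have : ψ (⟨a.1, h' a.2⟩ : C.1) = ψ a := rfl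
    rw [this, ← norm_sub_rev] at hb
    exact absurd hb (lt_irrefl _)
  · -- QuasiSober
    refine ⟨fun {F} hirr hclosed => ?_⟩
    obtain ⟨hne, hpre⟩ := hirr
    -- nonempty slices are singletons
    have huniq : ∀ (C : CommCStarSubalg A) (φ₁ φ₂ : characterSpace ℂ C.1),
        (⟨C, φ₁⟩ : GelfandSpec A) ∈ F → (⟨C, φ₂⟩ : GelfandSpec A) ∈ F → φ₁ = φ₂ := by
      intro C φ₁ φ₂ h₁ h₂
      by_contra hne'
      have ha : ∃ a : C.1, φ₁ a ≠ φ₂ a := by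
        by_contra hc; push_neg at hc; exact hne' (CharacterSpace.ext hc)
      obtain ⟨a, ha⟩ := ha
      set ε : ℝ := ‖φ₁ a - φ₂ a‖ / 2 with hε
      have hpos : (0 : ℝ) < ε := by
        have : (0 : ℝ) < ‖φ₁ a - φ₂ a‖ := by
          rw [norm_pos_iff]; exact sub_ne_zero.mpr ha
        positivity
      have hx₁ : (⟨C, φ₁⟩ : GelfandSpec A) ∈ SpecBall C a (φ₁ a) ε := by
        refine ⟨le_refl C, ?_⟩
        have : φ₁ (⟨a.1, (le_refl C) a.2⟩ : C.1) = φ₁ a := rfl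
        rw [this, sub_self, norm_zero]; exact hpos
      have hx₂ : (⟨C, φ₂⟩ : GelfandSpec A) ∈ SpecBall C a (φ₂ a) ε := by
        refine ⟨le_refl C, ?_⟩
        have : φ₂ (⟨a.1, (le_refl C) a.2⟩ : C.1) = φ₂ a := rfl
        rw [this, sub_self, norm_zero]; exact hpos
      obtain ⟨p, hpF, hp₁, hp₂⟩ := hpre _ _ (isOpen_specBall C a (φ₁ a) ε)
        (isOpen_specBall C a (φ₂ a) ε) ⟨_, h₁, hx₁⟩ ⟨_, h₂, hx₂⟩
      obtain ⟨h1, hb1⟩ := hp₁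
      obtain ⟨h2, hb2⟩ := hp₂
      have hb2' : ‖p.2 ⟨a.1, h1 a.2⟩ - φ₂ a‖ < ε := hb2
      have htri : ‖φ₁ a - φ₂ a‖ ≤ ‖φ₁ a - p.2 ⟨a.1, h1 a.2⟩‖ + ‖p.2 ⟨a.1, h1 a.2⟩ - φ₂ a‖ :=
        norm_sub_le_norm_sub_add_norm_sub _ _ _
      rw [norm_sub_rev (φ₁ a) (p.2 ⟨a.1, h1 a.2⟩)] at htri
      have : ‖φ₁ a - φ₂ a‖ < ε + ε := lt_of_le_of_lt htri (add_lt_add hb1 hb2')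
      rw [hε] at this
      linarith
    -- the set of levels meeting F
    set S : Set (CommCStarSubalg A) := {C | ∃ φ, (⟨C, φ⟩ : GelfandSpec A) ∈ F} with hS
    obtain ⟨p₀, hp₀⟩ := hne
    have hS0 : p₀.1 ∈ S := ⟨p₀.2, hp₀⟩
    -- directedness of S
    have hdir : ∀ C₁ ∈ S, ∀ C₂ ∈ S, ∃ D ∈ S, C₁ ≤ D ∧ C₂ ≤ D := by
      rintro C₁ ⟨φ₁, h₁⟩ C₂ ⟨φ₂, h₂⟩
      obtain ⟨p, hpF, hp₁, hp₂⟩ := hpre _ _ (isOpen_upSet C₁) (isOpen_upSet C₂)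
        ⟨_, h₁, le_refl C₁⟩ ⟨_, h₂, le_refl C₂⟩
      exact ⟨p.1, ⟨p.2, hpF⟩, hp₁, hp₂⟩
    -- a maximal element of S from ACC
    have hmax : ∃ M ∈ S, ∀ C ∈ S, ¬ M < C := by
      by_contra hc
      push_neg at hc
      choose f hfS hflt using hc
      let c : ℕ → {C : CommCStarSubalg A // C ∈ S} := fun n =>
        Nat.rec ⟨p₀.1, hS0⟩ (fun _ q => ⟨f q.1 q.2, hfS q.1 q.2⟩) n
      have hmono : ∀ n, (c n).1 ≤ (c (n + 1)).1 := fun n => (hflt (c n).1 (c n).2).le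
      obtain ⟨m, hm⟩ := hacc (fun n => (c n).1) hmono
      have h1 : (c (m + 1)).1 = (c m).1 := hm (m + 1) (Nat.lt_succ_self m)
      have h2 : (c m).1 < (c (m + 1)).1 := hflt (c m).1 (c m).2
      rw [h1] at h2
      exact lt_irrefl _ h2
    obtain ⟨M, hMS, hMmax⟩ := hmax
    -- M is the top of S
    have htop : ∀ C ∈ S, C ≤ M := by
      intro C hC
      obtain ⟨D, hDS, hMD, hCD⟩ := hdir M hMS C hC
      have : D = M := by
        by_contra hne'
        exact hMmax D hDS (lt_of_le_of_ne hMD (Ne.symm hne'))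
      rw [← this]; exact hCD
    obtain ⟨ψ, hψ⟩ := hMS
    refine ⟨⟨M, ψ⟩, ?_⟩
    apply le_antisymm
    · exact closure_minimal (Set.singleton_subset_iff.mpr hψ) hclosed
    · rintro ⟨C, φ⟩ hy
      have hCM : C ≤ M := htop C ⟨φ, hy⟩
      have hres : (⟨C, restrictChar hCM ψ⟩ : GelfandSpec A) ∈ F :=
        mem_of_isClosed_restrict hclosed hCM hψ
      have hφ : φ = restrictChar hCM ψ := huniq C φ _ hy hres
      rw [mem_closure_iff]
      intro U hU hyU
      have hU' : IsGoodOpen A U := hU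
      refine ⟨⟨M, ψ⟩, ?_, rfl⟩
      refine hU'.2 C M hCM φ ψ ?_ hyU
      rw [hφ]
      exact restrictsTo_restrictChar hCM ψ
end

section
/- If A is a finite-dimensional unital C*-algebra (i.e. finite-dimensional as a complex vector space), then the topological space Σ is sober: it is T0 and every irreducible closed subset of Σ is the closure of a (unique) point. -/
open WeakDual WeakDual.CharacterSpace

variable (A : Type*) [NormedRing A] [StarRing A] [CStarRing A] [NormedAlgebra ℂ A]
  [StarModule ℂ A] [CompleteSpace A]

variable {A}

variable (A)

variable {A}

/-- The specialization-like order on `Σ`. -/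
def SpecLe (x y : GelfandSpec A) : Prop := ∃ h : x.1 ≤ y.1, RestrictsTo h y.2 x.2

lemma SpecLe.rfl (x : GelfandSpec A) : SpecLe x x :=
  ⟨le_refl _, fun _ => _root_.rfl⟩

lemma SpecLe.trans' {x y z : GelfandSpec A} (h1 : SpecLe x y) (h2 : SpecLe y z) : SpecLe x z := by
  obtain ⟨hxy, rxy⟩ := h1
  obtain ⟨hyz, ryz⟩ := h2
  exact ⟨le_trans hxy hyz, fun a => (ryz ⟨a.1, hxy a.2⟩).trans (rxy a)⟩

lemma SpecLe.eq_of_le {x z : GelfandSpec A} (h : SpecLe x z) (h2 : z.1 ≤ x.1) : x = z := by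
  obtain ⟨C, φ⟩ := x
  obtain ⟨D, ψ⟩ := z
  obtain ⟨h1, hr⟩ := h
  obtain rfl : C = D := Subtype.ext (le_antisymm h1 h2)
  have : φ = ψ := DFunLike.ext _ _ fun a => (hr a).symm
  rw [this]

lemma finite_char [FiniteDimensional ℂ A] (C : CommCStarSubalg A) :
    Finite (characterSpace ℂ C.1) := by
  have hfd : FiniteDimensional ℂ C.1 :=
    FiniteDimensional.of_injective
      ({ toFun := Subtype.val, map_add' := fun _ _ => _root_.rfl,
         map_smul' := fun _ _ => _root_.rfl } : C.1 →ₗ[ℂ] A) Subtype.val_injective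
  have hcs : CompleteSpace C.1 := FiniteDimensional.complete ℂ _
  let j : characterSpace ℂ C.1 → (C.1 →* ℂ) := fun φ => (equivAlgHom φ).toMonoidHom
  have hj : Function.Injective j := by
    intro φ ψ h
    apply equivAlgHom.injective
    ext a
    have h' := congrArg (fun m : C.1 →* ℂ => (m : C.1 → ℂ)) h
    exact congrFun h' a
  have h1 : LinearIndependent ℂ (fun φ : characterSpace ℂ C.1 => ((j φ : C.1 → ℂ))) :=
    (linearIndependent_monoidHom C.1 ℂ).comp j hj
  let L : Module.Dual ℂ C.1 →ₗ[ℂ] (C.1 → ℂ) :=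
    { toFun := fun f => f, map_add' := fun f g => _root_.rfl,
      map_smul' := fun c f => _root_.rfl }
  let g : characterSpace ℂ C.1 → Module.Dual ℂ C.1 :=
    fun φ => (φ : WeakDual ℂ C.1).toLinearMap
  have h2 : LinearIndependent ℂ g := by
    apply LinearIndependent.of_comp L
    have heq : (⇑L ∘ g) = fun φ : characterSpace ℂ C.1 => ((j φ : C.1 → ℂ)) := _root_.rfl
    rw [heq]; exact h1
  exact h2.finite

lemma discrete_char [FiniteDimensional ℂ A] (C : CommCStarSubalg A) :
    DiscreteTopology (characterSpace ℂ C.1) := by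
  have := finite_char C
  infer_instance

lemma isOpen_upset [FiniteDimensional ℂ A] (x : GelfandSpec A) :
    IsOpen {y : GelfandSpec A | SpecLe x y} := by
  constructor
  · intro C
    have := discrete_char (A := A) C
    exact isOpen_discrete _
  · intro C D h φ ψ hr hm
    exact hm.trans' ⟨h, hr⟩

lemma mem_closure_of_specLe {x y : GelfandSpec A} (h : SpecLe y x) :
    y ∈ closure ({x} : Set (GelfandSpec A)) := by
  rw [mem_closure_iff]
  intro U hU hyU
  obtain ⟨hle, hr⟩ := h
  have hU' : IsGoodOpen A U := hU
  exact ⟨x, hU'.2 y.1 x.1 hle y.2 x.2 hr hyU, Set.mem_singleton x⟩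

variable (A)

/-- If `A` is finite dimensional (as a complex vector space), then `Σ` is sober: it is T0
and every irreducible closed subset is the closure of a point. -/
theorem sober_of_finiteDimensional [FiniteDimensional ℂ A] :
    T0Space (GelfandSpec A) ∧ QuasiSober (GelfandSpec A) := by
  constructor
  · refine ⟨fun x y h => ?_⟩
    rw [inseparable_iff_forall_isOpen] at h
    have h1 : SpecLe y x := (h _ (isOpen_upset y)).mpr (SpecLe.rfl y)
    have h2 : SpecLe x y := (h _ (isOpen_upset x)).mp (SpecLe.rfl x)
    obtain ⟨hle, -⟩ := h1
    exact h2.eq_of_le hle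
  · refine ⟨fun {S} hirr hcl => ?_⟩
    set f : GelfandSpec A → ℕ := fun x => Module.finrank ℂ x.1.1.toSubalgebra with hf
    have hbdd : BddAbove (f '' S) := by
      refine ⟨Module.finrank ℂ A, ?_⟩
      rintro n ⟨x, hx, rfl⟩
      have := Submodule.finrank_le (Subalgebra.toSubmodule x.1.1.toSubalgebra)
      rwa [Subalgebra.finrank_toSubmodule] at this
    have hmem : sSup (f '' S) ∈ f '' S := Nat.sSup_mem (hirr.1.image f) hbdd
    obtain ⟨x, hxS, hfx⟩ := hmem
    refine ⟨x, ?_⟩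
    refine le_antisymm (closure_minimal (Set.singleton_subset_iff.mpr hxS) hcl) ?_
    intro y hyS
    apply mem_closure_of_specLe
    obtain ⟨z, hzS, hxz, hyz⟩ :=
      hirr.2 _ _ (isOpen_upset x) (isOpen_upset y) ⟨x, hxS, SpecLe.rfl x⟩ ⟨y, hyS, SpecLe.rfl y⟩
    have hfz : f z ≤ f x := hfx ▸ le_csSup hbdd ⟨z, hzS, _root_.rfl⟩
    obtain ⟨hle, -⟩ := id hxz
    haveI : FiniteDimensional ℂ z.1.1.toSubalgebra := inferInstance
    have hsub : x.1.1.toSubalgebra = z.1.1.toSubalgebra :=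
      Subalgebra.eq_of_le_of_finrank_le (fun a ha => hle ha) hfz
    have hxz' : x = z :=
      hxz.eq_of_le (le_of_eq (Subtype.ext (StarSubalgebra.toSubalgebra_injective hsub.symm)))
    rw [hxz']
    exact hyz
end

section
/- Every valuation λ on a unital C*-algebra A satisfies λ(1) = 1, and λ(ab) = λ(a)λ(b) for all self-adjoint a, b ∈ A with ab = ba. -/
open WeakDual WeakDual.CharacterSpace

variable (A : Type*) [NormedRing A] [StarRing A] [CStarRing A] [NormedAlgebra ℂ A]
  [StarModule ℂ A] [CompleteSpace A]

namespace IsValuation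

variable {B : Type*} [NormedRing B] [StarRing B] [NormedAlgebra ℂ B] {l : selfAdjoint B → ℝ}

theorem map_sq (hl : IsValuation B l) (a : selfAdjoint B) : l (a ^ 2) = l a ^ 2 :=
  hl.dispersionFree a _ (by rw [selfAdjoint.val_pow, sq])

theorem map_add_of_commute (hl : IsValuation B l) {a b : selfAdjoint B}
    (hab : Commute (a : B) b) : l (a + b) = l a + l b := by
  simpa using hl.linear 1 1 a b (a + b) hab (by simp)

/-- Polarization: `(a + b)² = (a² + b²) + 2ab`, and `a² + b²` commutes with `ab`, so applying `l`
and dispersion-freeness leave `2 l(ab) = 2 l(a) l(b)`. -/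
theorem map_mul_of_commute (hl : IsValuation B l) {a b c : selfAdjoint B}
    (hab : Commute (a : B) b) (hc : (c : B) = a * b) : l c = l a * l b := by
  have hsq_comm : Commute ((a ^ 2 + b ^ 2 : selfAdjoint B) : B) c := by
    rw [AddSubgroup.coe_add, selfAdjoint.val_pow, selfAdjoint.val_pow, hc]
    exact (((Commute.refl _).mul_right hab).pow_left 2).add_left
      ((hab.symm.mul_right (Commute.refl _)).pow_left 2)
  have hpolar_eq : (((a + b) ^ 2 : selfAdjoint B) : B) =
      (1 : ℝ) • ((a ^ 2 + b ^ 2 : selfAdjoint B) : B) + (2 : ℝ) • (c : B) := by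
    rw [selfAdjoint.val_pow, AddSubgroup.coe_add, AddSubgroup.coe_add, selfAdjoint.val_pow,
      selfAdjoint.val_pow, hab.add_sq, hc, one_smul, two_smul, mul_assoc, two_mul]
    abel
  have hpolar : l ((a + b) ^ 2) = l (a ^ 2 + b ^ 2) + 2 * l c := by
    simpa using hl.linear 1 2 _ _ _ hsq_comm hpolar_eq
  have hpow_comm : Commute ((a ^ 2 : selfAdjoint B) : B) (b ^ 2 : selfAdjoint B) := by
    simpa only [selfAdjoint.val_pow] using hab.pow_pow 2 2
  rw [hl.map_sq, hl.map_add_of_commute hab, hl.map_add_of_commute hpow_comm, hl.map_sq,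
    hl.map_sq] at hpolar
  linear_combination -hpolar / 2

theorem map_one (hl : IsValuation B l) : l 1 = 1 := by
  have hidem : IsIdempotentElem (l 1) :=
    (sq _).symm.trans (hl.dispersionFree 1 1 (by rw [selfAdjoint.val_one, mul_one])).symm
  refine (IsIdempotentElem.iff_eq_zero_or_one.mp hidem).resolve_left fun hzero =>
    hl.ne_zero (funext fun a => ?_)
  rw [Pi.zero_apply, hl.map_mul_of_commute (b := 1) (c := a) (Commute.one_right (a : B))
    (by rw [selfAdjoint.val_one, mul_one]), hzero, mul_zero]

end IsValuation

/-- Every valuation `λ` on a unital C*-algebra satisfies `λ(1) = 1`, and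
`λ(ab) = λ(a)λ(b)` for all commuting self-adjoint `a, b`. -/
theorem valuation_map_one_and_mul (l : selfAdjoint A → ℝ) (hl : IsValuation A l) :
    l 1 = 1 ∧
    ∀ a b c : selfAdjoint A, (a : A) * (b : A) = (b : A) * (a : A) →
      (c : A) = (a : A) * (b : A) → l c = l a * l b :=
  ⟨hl.map_one, fun _ _ _ hab hc => hl.map_mul_of_commute hab hc⟩
end

section
/- Let λ be a valuation on a unital C*-algebra A and let C be a commutative unital C*-subalgebra of A. Then there exists a unique character φ : C → ℂ (nonzero unital ⋆-algebra homomorphism) such that φ(a) = λ(a) for every self-adjoint a ∈ C. -/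
open WeakDual WeakDual.CharacterSpace

variable (A : Type*) [NormedRing A] [StarRing A] [CStarRing A] [NormedAlgebra ℂ A]
  [StarModule ℂ A] [CompleteSpace A]

section Helpers

variable {l : selfAdjoint A → ℝ}

private lemma mul_sa' {x y : A} (hx : IsSelfAdjoint x) (hy : IsSelfAdjoint y)
    (h : x * y = y * x) : IsSelfAdjoint (x * y) := by
  show star (x * y) = x * y
  rw [star_mul, hx.star_eq, hy.star_eq, h]

private lemma val_lin (hl : IsValuation A l) (s t : ℝ) {x y z : A}
    (hx : IsSelfAdjoint x) (hy : IsSelfAdjoint y) (hz : IsSelfAdjoint z)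
    (hc : x * y = y * x) (hzv : z = s • x + t • y) :
    l ⟨z, hz⟩ = s * l ⟨x, hx⟩ + t * l ⟨y, hy⟩ :=
  hl.linear s t ⟨x, hx⟩ ⟨y, hy⟩ ⟨z, hz⟩ hc hzv

private lemma val_sq (hl : IsValuation A l) {x z : A} (hx : IsSelfAdjoint x)
    (hz : IsSelfAdjoint z) (hzv : z = x * x) :
    l ⟨z, hz⟩ = l ⟨x, hx⟩ ^ 2 :=
  hl.dispersionFree ⟨x, hx⟩ ⟨z, hz⟩ hzv

private lemma val_zero (hl : IsValuation A l) (h0 : IsSelfAdjoint (0 : A)) :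
    l ⟨0, h0⟩ = 0 := by
  have := val_lin A hl 0 0 h0 h0 h0 rfl (by simp)
  simpa using this

private lemma val_one (hl : IsValuation A l) (h1 : IsSelfAdjoint (1 : A)) :
    l ⟨1, h1⟩ = 1 := by
  have hsq : l ⟨1, h1⟩ = l ⟨1, h1⟩ ^ 2 := val_sq A hl h1 h1 (one_mul 1).symm
  have h01 : l ⟨1, h1⟩ = 0 ∨ l ⟨1, h1⟩ = 1 := by
    rcases mul_eq_zero.mp (show l ⟨1, h1⟩ * (l ⟨1, h1⟩ - 1) = 0 by nlinarith [hsq]) with h | h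
    · exact Or.inl h
    · exact Or.inr (by linarith)
  rcases h01 with h0 | h1'
  · exfalso
    have key : ∀ (x : A) (hx : IsSelfAdjoint x), l ⟨x, hx⟩ = 0 := by
      intro x hx
      have hx1 : IsSelfAdjoint (x + 1) := hx.add h1
      have hxx : IsSelfAdjoint (x * x) := mul_sa' A hx hx rfl
      have hy : IsSelfAdjoint (x + x + 1) := (hx.add hx).add h1
      have hsq' : IsSelfAdjoint ((x + 1) * (x + 1)) := mul_sa' A hx1 hx1 rfl
      have e1 : l ⟨x + 1, hx1⟩ = 1 * l ⟨x, hx⟩ + 1 * l ⟨1, h1⟩ :=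
        val_lin A hl 1 1 hx h1 hx1 (by rw [mul_one, one_mul]) (by module)
      have e2 : l ⟨x + x + 1, hy⟩ = 2 * l ⟨x, hx⟩ + 1 * l ⟨1, h1⟩ :=
        val_lin A hl 2 1 hx h1 hy (by rw [mul_one, one_mul]) (by module)
      have e3 : l ⟨(x + 1) * (x + 1), hsq'⟩ = 1 * l ⟨x * x, hxx⟩ + 1 * l ⟨x + x + 1, hy⟩ :=
        val_lin A hl 1 1 hxx hy hsq' (by noncomm_ring) (by simp only [one_smul]; noncomm_ring)
      have e4 : l ⟨(x + 1) * (x + 1), hsq'⟩ = l ⟨x + 1, hx1⟩ ^ 2 := val_sq A hl hx1 hsq' rfl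
      have e5 : l ⟨x * x, hxx⟩ = l ⟨x, hx⟩ ^ 2 := val_sq A hl hx hxx rfl
      nlinarith [e1, e2, e3, e4, e5, h0]
    apply hl.ne_zero
    funext a
    rw [Pi.zero_apply]
    have := key a.1 a.2
    rwa [Subtype.coe_eta] at this
  · exact h1'

end Helpers

/-- Given a valuation `λ` on `A` and a commutative unital C*-subalgebra `C` of `A`
(a closed, ⋆-closed commutative subalgebra containing the unit), there is a unique
character `φ` of `C` with `φ(a) = λ(a)` for every self-adjoint `a ∈ C`. -/
theorem valuation_extends_to_unique_character (l : selfAdjoint A → ℝ)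
    (hl : IsValuation A l) (C : StarSubalgebra ℂ A) (hC : IsClosed (C : Set A))
    (hcomm : ∀ x ∈ C, ∀ y ∈ C, x * y = y * x) :
    ∃! φ : characterSpace ℂ C, ∀ (a : A) (ha : a ∈ C) (hsa : IsSelfAdjoint a),
      φ (⟨a, ha⟩ : C) = ((l ⟨a, hsa⟩ : ℝ) : ℂ) := by
  classical
  haveI : CompleteSpace C := hC.completeSpace_coe
  -- basic commutation and star facts in `C`
  have comm' : ∀ p q : C, (p : A) * (q : A) = (q : A) * (p : A) := fun p q => hcomm p p.2 q q.2
  have commC : ∀ p q : C, p * q = q * p := fun p q => Subtype.ext (comm' p q)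
  have sa_of_C : ∀ {p : C}, star p = p → IsSelfAdjoint (p : A) := fun {p} h =>
    congrArg Subtype.val h
  have star_eqC : ∀ {p : C}, IsSelfAdjoint (p : A) → star p = p := fun {p} h => Subtype.ext h
  have smul_sa : ∀ (s : ℝ) {x : A}, IsSelfAdjoint x → IsSelfAdjoint ((s : ℂ) • x) := by
    intro s x hx
    show star _ = _
    rw [star_smul, hx.star_eq, RCLike.star_def, Complex.conj_ofReal]
  -- the functional on `C` induced by `l`
  let el : C → ℝ := fun x => if h : IsSelfAdjoint (x : A) then l ⟨(x : A), h⟩ else 0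
  have el_eq : ∀ (x : C) (v : A) (hv : IsSelfAdjoint v), (x : A) = v → el x = l ⟨v, hv⟩ := by
    intro x v hv hxv
    have hx : IsSelfAdjoint (x : A) := by rw [hxv]; exact hv
    show dite _ _ _ = _
    rw [dif_pos hx]
    exact congrArg l (Subtype.ext hxv)
  have h0A : IsSelfAdjoint (0 : A) := by simp [IsSelfAdjoint]
  have h1A : IsSelfAdjoint (1 : A) := by simp [IsSelfAdjoint]
  have el_zero : el 0 = 0 := by rw [el_eq 0 0 h0A rfl, val_zero A hl h0A]
  have el_one : el 1 = 1 := by rw [el_eq 1 1 h1A rfl, val_one A hl h1A]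
  have el_add : ∀ (x y : C), IsSelfAdjoint (x : A) → IsSelfAdjoint (y : A) →
      el (x + y) = el x + el y := by
    intro x y hx hy
    rw [el_eq (x + y) ((x : A) + (y : A)) (hx.add hy) rfl, el_eq x _ hx rfl, el_eq y _ hy rfl,
      val_lin A hl 1 1 hx hy (hx.add hy) (comm' x y) (by module)]
    ring
  have el_smul : ∀ (s : ℝ) (x : C), IsSelfAdjoint (x : A) → el ((s : ℂ) • x) = s * el x := by
    intro s x hx
    rw [el_eq ((s : ℂ) • x) ((s : ℂ) • (x : A)) (smul_sa s hx) rfl, el_eq x _ hx rfl,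
      val_lin A hl s 0 hx h0A (smul_sa s hx) (by simp) (by simp),
      val_zero A hl h0A]
    ring
  have el_sub : ∀ (x y : C), IsSelfAdjoint (x : A) → IsSelfAdjoint (y : A) →
      el (x - y) = el x - el y := by
    intro x y hx hy
    rw [el_eq (x - y) ((x : A) - (y : A)) (hx.sub hy) rfl, el_eq x _ hx rfl, el_eq y _ hy rfl,
      val_lin A hl 1 (-1) hx hy (hx.sub hy) (comm' x y) (by module)]
    ring
  have el_mul : ∀ (x y : C), IsSelfAdjoint (x : A) → IsSelfAdjoint (y : A) →
      el (x * y) = el x * el y := by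
    intro x y hx hy
    have hxyc := comm' x y
    have hxy : IsSelfAdjoint ((x : A) * y) := mul_sa' A hx hy hxyc
    have hxx : IsSelfAdjoint ((x : A) * x) := mul_sa' A hx hx rfl
    have hyy : IsSelfAdjoint ((y : A) * y) := mul_sa' A hy hy rfl
    have hs : IsSelfAdjoint ((x : A) + y) := hx.add hy
    have hd : IsSelfAdjoint ((y : A) * y + ((x : A) * y + (x : A) * y)) := hyy.add (hxy.add hxy)
    have hss : IsSelfAdjoint (((x : A) + y) * ((x : A) + y)) := mul_sa' A hs hs rfl
    have c1 : ((y : A) * y) * ((x : A) * y) = ((x : A) * y) * ((y : A) * y) :=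
      hcomm _ (mul_mem y.2 y.2) _ (mul_mem x.2 y.2)
    have c2 : ((x : A) * x) * ((y : A) * y + ((x : A) * y + (x : A) * y))
        = ((y : A) * y + ((x : A) * y + (x : A) * y)) * ((x : A) * x) :=
      hcomm _ (mul_mem x.2 x.2) _
        (add_mem (mul_mem y.2 y.2) (add_mem (mul_mem x.2 y.2) (mul_mem x.2 y.2)))
    have eL : l ⟨((x : A) + y) * ((x : A) + y), hss⟩ = l ⟨(x : A) + y, hs⟩ ^ 2 :=
      val_sq A hl hs hss rfl
    have eS : l ⟨(x : A) + y, hs⟩ = 1 * l ⟨(x : A), hx⟩ + 1 * l ⟨(y : A), hy⟩ :=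
      val_lin A hl 1 1 hx hy hs hxyc (by module)
    have eD : l ⟨(y : A) * y + ((x : A) * y + (x : A) * y), hd⟩
        = 1 * l ⟨(y : A) * y, hyy⟩ + 2 * l ⟨(x : A) * y, hxy⟩ :=
      val_lin A hl 1 2 hyy hxy hd c1 (by module)
    have eE : l ⟨((x : A) + y) * ((x : A) + y), hss⟩
        = 1 * l ⟨(x : A) * x, hxx⟩ + 1 * l ⟨(y : A) * y + ((x : A) * y + (x : A) * y), hd⟩ :=
      val_lin A hl 1 1 hxx hd hss c2
        (by simp only [one_smul]; rw [add_mul, mul_add, mul_add, ← hxyc]; abel)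
    have eX : l ⟨(x : A) * x, hxx⟩ = l ⟨(x : A), hx⟩ ^ 2 := val_sq A hl hx hxx rfl
    have eY : l ⟨(y : A) * y, hyy⟩ = l ⟨(y : A), hy⟩ ^ 2 := val_sq A hl hy hyy rfl
    rw [el_eq (x * y) ((x : A) * y) hxy rfl, el_eq x _ hx rfl, el_eq y _ hy rfl]
    linear_combination (-(1:ℝ)/2) * eD + (-(1:ℝ)/2) * eE + ((1:ℝ)/2) * eL
      + ((1:ℝ)/2) * (l ⟨(x : A) + y, hs⟩ + l ⟨(x : A), hx⟩ + l ⟨(y : A), hy⟩) * eS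
      + (-(1:ℝ)/2) * eX + (-(1:ℝ)/2) * eY
  have hI3 : Complex.I ^ 3 = -Complex.I := by
    rw [pow_succ, Complex.I_sq]; ring
  -- real and imaginary parts inside C
  let aC : C → C := fun x => (2⁻¹ : ℂ) • (x + star x)
  let bC : C → C := fun x => (2⁻¹ : ℂ) • (Complex.I • (star x - x))
  have star_aC : ∀ x : C, star (aC x) = aC x := by
    intro x
    show star ((2⁻¹ : ℂ) • (x + star x)) = (2⁻¹ : ℂ) • (x + star x)
    rw [star_smul, star_add, star_star]
    rw [show star (2⁻¹ : ℂ) = 2⁻¹ by simp]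
    rw [add_comm]
  have star_bC : ∀ x : C, star (bC x) = bC x := by
    intro x
    show star ((2⁻¹ : ℂ) • (Complex.I • (star x - x))) = (2⁻¹ : ℂ) • (Complex.I • (star x - x))
    rw [star_smul, star_smul, star_sub, star_star]
    rw [show star (2⁻¹ : ℂ) = 2⁻¹ by simp, show star Complex.I = -Complex.I by simp]
    module
  have aC_sa : ∀ x : C, IsSelfAdjoint ((aC x : C) : A) := fun x => sa_of_C (star_aC x)
  have bC_sa : ∀ x : C, IsSelfAdjoint ((bC x : C) : A) := fun x => sa_of_C (star_bC x)
  have decompC : ∀ x : C, x = aC x + Complex.I • bC x := by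
    intro x
    show x = (2⁻¹ : ℂ) • (x + star x) + Complex.I • ((2⁻¹ : ℂ) • (Complex.I • (star x - x)))
    match_scalars <;> ((try ring_nf); (try rw [hI3]); (try rw [Complex.I_sq]); (try ring_nf); (try norm_num); (try ring1))
  have decomp_eq : ∀ (p q : C), star p = p → star q = q → ∀ x : C,
      x = p + Complex.I • q → aC x = p ∧ bC x = q := by
    intro p q hp hq x hx
    have hstar : star x = p - Complex.I • q := by
      rw [hx, star_add, star_smul, hp, hq, show star Complex.I = -Complex.I by simp]
      module
    constructor
    · show (2⁻¹ : ℂ) • (x + star x) = p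
      rw [hstar, hx]; module
    · show (2⁻¹ : ℂ) • (Complex.I • (star x - x)) = q
      rw [hstar, hx]
      match_scalars <;> ((try ring_nf); (try rw [hI3]); (try rw [Complex.I_sq]); (try ring_nf); (try norm_num); (try ring1))
  -- the candidate character as a bare function
  let φ₀ : C → ℂ := fun x => (el (aC x) : ℂ) + Complex.I * el (bC x)
  have φ₀_decomp : ∀ (x p q : C), star p = p → star q = q → x = p + Complex.I • q →
      φ₀ x = (el p : ℂ) + Complex.I * el q := by
    intro x p q hp hq hx
    obtain ⟨h1, h2⟩ := decomp_eq p q hp hq x hx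
    show (el (aC x) : ℂ) + Complex.I * el (bC x) = _
    rw [h1, h2]
  have φ₀_sa : ∀ (x : C), IsSelfAdjoint (x : A) → φ₀ x = el x := by
    intro x hx
    rw [φ₀_decomp x x 0 (star_eqC hx) (star_zero C) (by module), el_zero]
    push_cast; ring
  have φ₀_one : φ₀ 1 = 1 := by rw [φ₀_sa 1 h1A, el_one]; norm_num
  have φ₀_zero : φ₀ 0 = 0 := by rw [φ₀_sa 0 h0A, el_zero]; norm_num
  have φ₀_add : ∀ x y : C, φ₀ (x + y) = φ₀ x + φ₀ y := by
    intro x y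
    have hd : x + y = (aC x + aC y) + Complex.I • (bC x + bC y) := by
      conv_lhs => rw [decompC x, decompC y]
      module
    rw [φ₀_decomp (x + y) _ _ (by rw [star_add, star_aC, star_aC])
        (by rw [star_add, star_bC, star_bC]) hd,
      el_add _ _ (aC_sa x) (aC_sa y), el_add _ _ (bC_sa x) (bC_sa y)]
    show _ = ((el (aC x) : ℂ) + Complex.I * el (bC x)) + ((el (aC y) : ℂ) + Complex.I * el (bC y))
    push_cast; ring
  have φ₀_mul : ∀ x y : C, φ₀ (x * y) = φ₀ x * φ₀ y := by
    intro x y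
    have hstar_p : star (aC x * aC y - bC x * bC y) = aC x * aC y - bC x * bC y := by
      rw [star_sub, star_mul, star_aC, star_aC, star_mul, star_bC, star_bC,
        commC (aC y) (aC x), commC (bC y) (bC x)]
    have hstar_q : star (aC x * bC y + bC x * aC y) = aC x * bC y + bC x * aC y := by
      rw [star_add, star_mul, star_aC, star_bC, star_mul, star_bC, star_aC,
        commC (bC y) (aC x), commC (aC y) (bC x), add_comm]
    have hd : x * y = (aC x * aC y - bC x * bC y) + Complex.I • (aC x * bC y + bC x * aC y) := by
      conv_lhs => rw [decompC x, decompC y]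
      simp only [add_mul, mul_add, smul_mul_assoc, mul_smul_comm, smul_smul, Complex.I_mul_I]
      match_scalars <;> ((try ring_nf); (try rw [hI3]); (try rw [Complex.I_sq]); (try ring_nf); (try norm_num); (try ring1))
    rw [φ₀_decomp (x * y) _ _ hstar_p hstar_q hd,
      el_sub _ _ (mul_sa' A (aC_sa x) (aC_sa y) (comm' _ _)) (mul_sa' A (bC_sa x) (bC_sa y) (comm' _ _)),
      el_add _ _ (mul_sa' A (aC_sa x) (bC_sa y) (comm' _ _)) (mul_sa' A (bC_sa x) (aC_sa y) (comm' _ _)),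
      el_mul _ _ (aC_sa x) (aC_sa y), el_mul _ _ (bC_sa x) (bC_sa y),
      el_mul _ _ (aC_sa x) (bC_sa y), el_mul _ _ (bC_sa x) (aC_sa y)]
    show _ = ((el (aC x) : ℂ) + Complex.I * el (bC x)) * ((el (aC y) : ℂ) + Complex.I * el (bC y))
    push_cast
    linear_combination (-((el (bC x) : ℂ) * (el (bC y) : ℂ))) * Complex.I_mul_I
  have smul_saC : ∀ (r : ℝ) (p : C), star p = p → star ((r : ℂ) • p) = (r : ℂ) • p := by
    intro r p hp
    rw [star_smul, hp, RCLike.star_def, Complex.conj_ofReal]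
  have φ₀_smul : ∀ (c : ℂ) (x : C), φ₀ (c • x) = c • φ₀ x := by
    intro c x
    have hp : star ((c.re : ℂ) • aC x - (c.im : ℂ) • bC x)
        = (c.re : ℂ) • aC x - (c.im : ℂ) • bC x := by
      rw [star_sub, smul_saC _ _ (star_aC x), smul_saC _ _ (star_bC x)]
    have hq : star ((c.im : ℂ) • aC x + (c.re : ℂ) • bC x)
        = (c.im : ℂ) • aC x + (c.re : ℂ) • bC x := by
      rw [star_add, smul_saC _ _ (star_aC x), smul_saC _ _ (star_bC x)]
    have hd : c • x = ((c.re : ℂ) • aC x - (c.im : ℂ) • bC x)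
        + Complex.I • ((c.im : ℂ) • aC x + (c.re : ℂ) • bC x) := by
      conv_lhs => rw [decompC x, ← Complex.re_add_im c]
      match_scalars <;> ((try ring_nf); (try rw [hI3]); (try rw [Complex.I_sq]); (try ring_nf); (try norm_num); (try ring1))
    rw [φ₀_decomp (c • x) _ _ hp hq hd,
      el_sub _ _ (smul_sa _ (aC_sa x)) (smul_sa _ (bC_sa x)),
      el_add _ _ (smul_sa _ (aC_sa x)) (smul_sa _ (bC_sa x)),
      el_smul _ _ (aC_sa x), el_smul _ _ (bC_sa x), el_smul _ _ (aC_sa x), el_smul _ _ (bC_sa x)]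
    show _ = c * ((el (aC x) : ℂ) + Complex.I * el (bC x))
    conv_rhs => rw [← Complex.re_add_im c]
    push_cast
    linear_combination (-((c.im : ℂ) * (el (bC x) : ℂ))) * Complex.I_mul_I
  -- assemble the algebra homomorphism and the character
  let ψ : C →ₐ[ℂ] ℂ := AlgHom.mk'
    { toFun := φ₀, map_one' := φ₀_one, map_mul' := φ₀_mul,
      map_zero' := φ₀_zero, map_add' := φ₀_add } φ₀_smul
  have hmain : ∀ (a : A) (ha : a ∈ C) (hsa : IsSelfAdjoint a),
      (equivAlgHom.symm ψ) (⟨a, ha⟩ : C) = ((l ⟨a, hsa⟩ : ℝ) : ℂ) := by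
    intro a ha hsa
    have h1 : (equivAlgHom.symm ψ) (⟨a, ha⟩ : C) = ψ ⟨a, ha⟩ := by
      rw [equivAlgHom_symm_coe]
    rw [h1]
    show φ₀ ⟨a, ha⟩ = _
    rw [φ₀_sa ⟨a, ha⟩ hsa, el_eq ⟨a, ha⟩ a hsa rfl]
  refine ⟨equivAlgHom.symm ψ, hmain, fun φ' hφ' => ?_⟩
  refine Subtype.ext (ContinuousLinearMap.ext fun x => ?_)
  have key : ∀ (χ : characterSpace ℂ C),
      (∀ (a : A) (ha : a ∈ C) (hsa : IsSelfAdjoint a),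
        χ (⟨a, ha⟩ : C) = ((l ⟨a, hsa⟩ : ℝ) : ℂ)) →
      χ x = ((el (aC x) : ℂ) + Complex.I * el (bC x)) := by
    intro χ hχ
    have h1 : χ x = χ (aC x) + Complex.I * χ (bC x) := by
      conv_lhs => rw [decompC x]
      rw [map_add χ (aC x) (Complex.I • bC x), map_smul χ Complex.I (bC x), smul_eq_mul]
    have h2 : χ (aC x) = (el (aC x) : ℂ) := by
      rw [hχ (aC x) (aC x).2 (aC_sa x), el_eq (aC x) _ (aC_sa x) rfl]
    have h3 : χ (bC x) = (el (bC x) : ℂ) := by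
      rw [hχ (bC x) (bC x).2 (bC_sa x), el_eq (bC x) _ (bC_sa x) rfl]
    rw [h1, h2, h3]
  have k1 := key φ' hφ'
  have k2 := key (equivAlgHom.symm ψ) hmain
  show φ' x = _
  rw [k1, ← k2]
  rfl
end

section
/- Let A = Mₙ(ℂ) be the C*-algebra of n × n complex matrices. Then the frame O(Σ) of open subsets of Σ, ordered by inclusion, is order-isomorphic to the set of functions S : 𝒞(A) → P(A) such that S(C) ∈ P(C) for every C ∈ 𝒞(A) and S(C) ≤ S(D) whenever C ⊆ D, equipped with the pointwise partial order (S ≤ T iff S(C) ≤ T(C) for all C ∈ 𝒞(A)). -/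
open scoped Matrix.Norms.L2Operator

open WeakDual WeakDual.CharacterSpace

variable (A : Type*) [NormedRing A] [StarRing A] [CStarRing A] [NormedAlgebra ℂ A]
  [StarModule ℂ A] [CompleteSpace A]

variable {A}

variable (A)

/-!
In finite dimensions every commutative C*-subalgebra `C` has a finite, hence discrete, Gelfand
spectrum, so Gelfand duality matches the projections of `C` with arbitrary subsets of `Σ(C)`,
via `p ↦ {φ | φ p = 1}`. Condition (1) is then automatic. A projection `p` satisfies `p * q = p`
iff every character that is `1` at `p` is `1` at `q`; since a character `ψ` of `D ⊇ C` takes the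
value `(ψ|_C)(p)` at `p ∈ C`, this turns condition (2) into `S(C) ≤ S(D)`, and inclusion of open
sets into the pointwise order.
-/

open WeakDual.CharacterSpace

instance WeakDual.CharacterSpace.finite_of_finiteDimensional {𝕜 B : Type*}
    [NontriviallyNormedField 𝕜] [NormedRing B] [NormedAlgebra 𝕜 B] [CompleteSpace B]
    [FiniteDimensional 𝕜 B] : Finite (characterSpace 𝕜 B) :=
  Finite.of_equiv _ equivAlgHom.symm

instance WeakDual.CharacterSpace.discreteTopology_of_finiteDimensional {𝕜 B : Type*}
    [NontriviallyNormedField 𝕜] [NormedRing B] [NormedAlgebra 𝕜 B] [CompleteSpace B]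
    [FiniteDimensional 𝕜 B] : DiscreteTopology (characterSpace 𝕜 B) :=
  Finite.instDiscreteTopology

section CommCStarAlgebra

variable {B : Type*} [CommCStarAlgebra B]

theorem eq_of_forall_character_apply_eq {x y : B}
    (h : ∀ φ : characterSpace ℂ B, φ x = φ y) : x = y :=
  (gelfandTransform_bijective B).1 (ContinuousMap.ext h)

theorem mul_eq_left_iff_forall_character {p q : B} (hp : IsIdempotentElem p) :
    p * q = p ↔ ∀ φ : characterSpace ℂ B, φ p = 1 → φ q = 1 := by
  constructor
  · intro hpq φ hφ
    rw [← hφ, ← one_mul (φ q), ← hφ, ← map_mul, hpq]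
  · intro h
    refine eq_of_forall_character_apply_eq fun φ => ?_
    rw [map_mul]
    rcases IsIdempotentElem.iff_eq_zero_or_one.1 (hp.map φ) with h0 | h1
    · rw [h0, zero_mul]
    · rw [h1, h φ h1, one_mul]

variable [DiscreteTopology (characterSpace ℂ B)]

noncomputable def indicatorProj (V : Set (characterSpace ℂ B)) : B :=
  (gelfandStarTransform B).symm ⟨V.indicator 1, continuous_of_discreteTopology⟩

theorem apply_indicatorProj (V : Set (characterSpace ℂ B)) (φ : characterSpace ℂ B) :
    φ (indicatorProj V) = V.indicator 1 φ :=
  congr($((gelfandStarTransform B).apply_symm_apply ⟨V.indicator 1, _⟩) φ)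

theorem apply_indicatorProj_eq_one_iff {V : Set (characterSpace ℂ B)} {φ : characterSpace ℂ B} :
    φ (indicatorProj V) = 1 ↔ φ ∈ V := by
  classical
  rw [apply_indicatorProj, Set.indicator_apply]
  split_ifs with h <;> simp [h]

theorem isIdempotentElem_indicatorProj (V : Set (characterSpace ℂ B)) :
    IsIdempotentElem (indicatorProj V) :=
  eq_of_forall_character_apply_eq fun φ => by
    classical
    rw [map_mul, apply_indicatorProj, Set.indicator_apply]
    split_ifs <;> simp

theorem isSelfAdjoint_indicatorProj (V : Set (characterSpace ℂ B)) :
    IsSelfAdjoint (indicatorProj V) :=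
  eq_of_forall_character_apply_eq fun φ => by
    classical
    rw [map_star, apply_indicatorProj, Set.indicator_apply]
    split_ifs <;> simp

theorem indicatorProj_setOf_apply_eq_one {p : B} (hp : IsIdempotentElem p) :
    indicatorProj {φ : characterSpace ℂ B | φ p = 1} = p :=
  eq_of_forall_character_apply_eq fun φ => by
    classical
    rw [apply_indicatorProj, Set.indicator_apply]
    rcases IsIdempotentElem.iff_eq_zero_or_one.1 (hp.map φ) with h0 | h1 <;> simp [*]

end CommCStarAlgebra

variable {A : Type*} [NormedRing A] [StarRing A] [CStarRing A] [NormedAlgebra ℂ A]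
  [StarModule ℂ A] [CompleteSpace A]

noncomputable instance (C : CommCStarSubalg A) : CommCStarAlgebra C.1 where
  toCompleteSpace := C.2.1.completeSpace_coe
  norm_mul_self_le x := (CStarRing.norm_star_mul_self (x := (x : A))).symm.le
  mul_comm x y := Subtype.ext (C.2.2 x.1 x.2 y.1 y.2)

theorem restrictsTo_compContinuousMap_inclusion {C D : CommCStarSubalg A} (h : C ≤ D)
    (ψ : characterSpace ℂ D.1) :
    RestrictsTo h ψ (compContinuousMap (StarSubalgebra.inclusion h) ψ) :=
  fun _ => rfl

variable [FiniteDimensional ℂ A]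

instance (C : CommCStarSubalg A) : FiniteDimensional ℂ C.1 :=
  FiniteDimensional.of_injective C.1.subtype.toLinearMap Subtype.val_injective

noncomputable def opensProj (U : Set (GelfandSpec A)) (C : CommCStarSubalg A) : C.1 :=
  indicatorProj {φ | (⟨C, φ⟩ : GelfandSpec A) ∈ U}

theorem apply_opensProj_eq_one_iff {U : Set (GelfandSpec A)} {C : CommCStarSubalg A}
    {φ : characterSpace ℂ C.1} : φ (opensProj U C) = 1 ↔ (⟨C, φ⟩ : GelfandSpec A) ∈ U :=
  apply_indicatorProj_eq_one_iff

theorem opensProj_mul_of_le {U : Set (GelfandSpec A)} (hU : IsOpen U)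
    {C D : CommCStarSubalg A} (h : C ≤ D) :
    (opensProj U C : A) * opensProj U D = opensProj U C := by
  have hp : IsIdempotentElem (StarSubalgebra.inclusion h (opensProj U C)) :=
    (isIdempotentElem_indicatorProj _).map _
  have hmul := (mul_eq_left_iff_forall_character hp (q := opensProj U D)).2 fun ψ hψ =>
    apply_opensProj_eq_one_iff.2 <|
      hU.2 C D h _ ψ (restrictsTo_compContinuousMap_inclusion h ψ)
        (apply_opensProj_eq_one_iff.1 hψ)
  exact congr(Subtype.val $hmul)

def projSupport (S : (C : CommCStarSubalg A) → A) (hS : ∀ C, S C ∈ C.1) :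
    Set (GelfandSpec A) :=
  {x | x.2 ⟨S x.1, hS x.1⟩ = 1}

theorem isOpen_projSupport {S : (C : CommCStarSubalg A) → A} (hS : ∀ C, S C ∈ C.1)
    (hmono : ∀ C D, C ≤ D → S C * S D = S C) : IsOpen (projSupport S hS) := by
  refine ⟨fun C => isOpen_discrete _, fun C D h φ ψ hres hφ => ?_⟩
  have hCD : (⟨S C, h (hS C)⟩ : D.1) * ⟨S D, hS D⟩ = ⟨S C, h (hS C)⟩ :=
    Subtype.ext (hmono C D h)
  have hψ : ψ ⟨S C, h (hS C)⟩ = 1 := (hres ⟨S C, hS C⟩).trans hφ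
  calc ψ ⟨S D, hS D⟩ = ψ ⟨S C, h (hS C)⟩ * ψ ⟨S D, hS D⟩ := by rw [hψ, one_mul]
    _ = 1 := by rw [← map_mul, hCD, hψ]

variable (A) in
abbrev MonotoneProjField :=
  {S : (C : CommCStarSubalg A) → A //
    (∀ C, S C ∈ C.1 ∧ S C * S C = S C ∧ star (S C) = S C) ∧
    (∀ C D, C ≤ D → S C * S D = S C)}

noncomputable def opensEquivMonotoneProjField :
    {U : Set (GelfandSpec A) // IsOpen U} ≃ MonotoneProjField A where
  toFun U := ⟨fun C => opensProj U.1 C,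
    fun C => ⟨(opensProj U.1 C).2, (isIdempotentElem_indicatorProj _).map C.1.subtype,
      (isSelfAdjoint_indicatorProj _).map C.1.subtype⟩,
    fun _ _ h => opensProj_mul_of_le U.2 h⟩
  invFun S := ⟨projSupport S.1 fun C => (S.2.1 C).1, isOpen_projSupport _ S.2.2⟩
  left_inv _ := Subtype.ext <| Set.ext fun _ => apply_opensProj_eq_one_iff
  right_inv S := Subtype.ext <| funext fun C =>
    congr(Subtype.val $(indicatorProj_setOf_apply_eq_one
      (Subtype.ext (S.2.1 C).2.1 : IsIdempotentElem (⟨S.1 C, (S.2.1 C).1⟩ : C.1))))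

theorem opensProj_mul_eq_left_iff {U V : Set (GelfandSpec A)} (C : CommCStarSubalg A) :
    (opensProj U C : A) * opensProj V C = opensProj U C ↔
      ∀ φ, (⟨C, φ⟩ : GelfandSpec A) ∈ U → (⟨C, φ⟩ : GelfandSpec A) ∈ V :=
  (Subtype.ext_iff (a1 := opensProj U C * opensProj V C)).symm.trans <|
    (mul_eq_left_iff_forall_character (isIdempotentElem_indicatorProj _)).trans <|
      forall_congr' fun _ => imp_congr apply_opensProj_eq_one_iff apply_opensProj_eq_one_iff

theorem subset_iff_opensEquivMonotoneProjField_mul_eq_left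
    (U V : {U : Set (GelfandSpec A) // IsOpen U}) :
    U.1 ⊆ V.1 ↔ ∀ C, (opensEquivMonotoneProjField U).1 C *
      (opensEquivMonotoneProjField V).1 C = (opensEquivMonotoneProjField U).1 C :=
  ⟨fun hUV C => (opensProj_mul_eq_left_iff C).2 fun _ hφ => hUV hφ,
    fun h ⟨C, φ⟩ => (opensProj_mul_eq_left_iff C).1 (h C) φ⟩

/-- For `A = Mₙ(ℂ)` (with its C*-algebra structure given by the L2 operator norm), the
frame `O(Σ)` of open subsets of `Σ`, ordered by inclusion, is order-isomorphic to the set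
of maps `S : 𝒞(A) → P(A)` with `S(C) ∈ P(C)` and `S(C) ≤ S(D)` for `C ⊆ D`, with the
pointwise order of projections (`p ≤ q` iff `pq = p`). -/
theorem opens_gelfandSpec_matrix_orderIso (n : ℕ) :
    ∃ e : {U : Set (GelfandSpec (Matrix (Fin n) (Fin n) ℂ)) // IsOpen U} ≃
        {S : (C : CommCStarSubalg (Matrix (Fin n) (Fin n) ℂ)) →
            Matrix (Fin n) (Fin n) ℂ //
          (∀ C, S C ∈ C.1 ∧ S C * S C = S C ∧ star (S C) = S C) ∧
          (∀ C D, C ≤ D → S C * S D = S C)},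
      ∀ U V, U.1 ⊆ V.1 ↔ ∀ C, (e U).1 C * (e V).1 C = (e U).1 C :=
  ⟨opensEquivMonotoneProjField, subset_iff_opensEquivMonotoneProjField_mul_eq_left⟩
end
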